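/- arXiv:2207.01384 — 6 statements merged into one kernel-verified Lean document; each statement's English description precedes it below -/
import Mathlib

section
/- Let z ∈ [0,1)^n (no stubborn agents). Then the matrix powers Q(z)^t converge entrywise as t → ∞ to the rank-one row-stochastic matrix H(z) = (1/γ(z)) · 1 π'(I − [z])^{-1}, i.e., the matrix whose every row i has entries H_{ij}(z) = (π_j/(1 − z_j))/γ(z). -/
open Matrix Filter Topology Finset

private lemma pow_nonneg'' {n : ℕ} (A : Matrix (Fin n) (Fin n) ℝ)
    (h : ∀ i j, 0 ≤ A i j) (t : ℕ) : ∀ i j, 0 ≤ (A ^ t) i j := by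
  induction t with
  | zero => intro i j; by_cases hij : i = j <;> simp [Matrix.one_apply, hij]
  | succ t ih =>
    intro i j
    rw [pow_succ, Matrix.mul_apply]
    exact Finset.sum_nonneg fun k _ => mul_nonneg (ih i k) (h k j)

private lemma rowsum_pow {n : ℕ} (A : Matrix (Fin n) (Fin n) ℝ)
    (h : ∀ i, ∑ j, A i j = 1) (t : ℕ) : ∀ i, ∑ j, (A ^ t) i j = 1 := by
  induction t with
  | zero => intro i; simp [Matrix.one_apply]
  | succ t ih =>
    intro i
    simp only [pow_succ, Matrix.mul_apply]
    rw [Finset.sum_comm]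
    calc ∑ k, ∑ j, (A ^ t) i k * A k j = ∑ k, (A ^ t) i k * ∑ j, A k j := by
          simp [Finset.mul_sum]
      _ = ∑ k, (A ^ t) i k := by simp [h]
      _ = 1 := ih i

private lemma pow_mono'' {n : ℕ} (A B : Matrix (Fin n) (Fin n) ℝ)
    (hA : ∀ i j, 0 ≤ A i j) (hAB : ∀ i j, A i j ≤ B i j) (t : ℕ) :
    ∀ i j, (A ^ t) i j ≤ (B ^ t) i j := by
  induction t with
  | zero => intro i j; rw [pow_zero, pow_zero]
  | succ t ih =>
    intro i j
    rw [pow_succ, pow_succ, Matrix.mul_apply, Matrix.mul_apply]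
    refine Finset.sum_le_sum fun k _ => ?_
    exact mul_le_mul (ih i k) (hAB k j) (hA k j)
      (le_trans (pow_nonneg'' A hA t i k) (ih i k))

private lemma mulVec_le_sup {n : ℕ} [NeZero n] (A : Matrix (Fin n) (Fin n) ℝ)
    (hA : ∀ i j, 0 ≤ A i j) (hrow : ∀ i, ∑ j, A i j = 1) (x : Fin n → ℝ) (i : Fin n) :
    (A *ᵥ x) i ≤ univ.sup' univ_nonempty x := by
  calc (A *ᵥ x) i = ∑ k, A i k * x k := rfl
    _ ≤ ∑ k, A i k * univ.sup' univ_nonempty x :=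
      Finset.sum_le_sum fun k _ =>
        mul_le_mul_of_nonneg_left (Finset.le_sup' x (mem_univ k)) (hA i k)
    _ = univ.sup' univ_nonempty x := by rw [← Finset.sum_mul, hrow, one_mul]

private lemma inf_le_mulVec {n : ℕ} [NeZero n] (A : Matrix (Fin n) (Fin n) ℝ)
    (hA : ∀ i j, 0 ≤ A i j) (hrow : ∀ i, ∑ j, A i j = 1) (x : Fin n → ℝ) (i : Fin n) :
    univ.inf' univ_nonempty x ≤ (A *ᵥ x) i := by
  calc univ.inf' univ_nonempty x = ∑ k, A i k * univ.inf' univ_nonempty x := by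
        rw [← Finset.sum_mul, hrow, one_mul]
    _ ≤ ∑ k, A i k * x k :=
      Finset.sum_le_sum fun k _ =>
        mul_le_mul_of_nonneg_left (Finset.inf'_le x (mem_univ k)) (hA i k)
    _ = (A *ᵥ x) i := rfl

private lemma osc_contract {n : ℕ} [NeZero n] (A : Matrix (Fin n) (Fin n) ℝ) (δ : ℝ)
    (hδ : 0 ≤ δ) (hA : ∀ i j, δ ≤ A i j) (hrow : ∀ i, ∑ j, A i j = 1)
    (x : Fin n → ℝ) :
    univ.sup' univ_nonempty (A *ᵥ x) - univ.inf' univ_nonempty (A *ᵥ x)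
      ≤ (1 - 2 * δ) * (univ.sup' univ_nonempty x - univ.inf' univ_nonempty x) := by
  set M := univ.sup' univ_nonempty x with hM
  set m := univ.inf' univ_nonempty x with hm
  have hAnn : ∀ i j, 0 ≤ A i j := fun i j => le_trans hδ (hA i j)
  have hmM : m ≤ M := by
    obtain ⟨i⟩ := (inferInstance : Nonempty (Fin n))
    exact le_trans (Finset.inf'_le x (mem_univ i)) (Finset.le_sup' x (mem_univ i))
  obtain ⟨j0, _, hj0⟩ := Finset.exists_mem_eq_inf' (univ_nonempty) x
  obtain ⟨j1, _, hj1⟩ := Finset.exists_mem_eq_sup' (univ_nonempty) x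
  have hup : ∀ i, (A *ᵥ x) i ≤ M - δ * (M - m) := by
    intro i
    have h1 : (A *ᵥ x) i = (∑ k, A i k * (x k - M)) + M := by
      simp only [mulVec, dotProduct, mul_sub, Finset.sum_sub_distrib,
        ← Finset.sum_mul, hrow, one_mul]
      ring
    have h2 : ∑ k, A i k * (x k - M) ≤ A i j0 * (x j0 - M) := by
      rw [← Finset.sum_erase_add univ _ (mem_univ j0)]
      have : ∑ k ∈ univ.erase j0, A i k * (x k - M) ≤ 0 :=
        Finset.sum_nonpos fun k _ => mul_nonpos_of_nonneg_of_nonpos (hAnn i k)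
          (by have := Finset.le_sup' x (mem_univ k); linarith)
      linarith
    have h3 : A i j0 * (x j0 - M) ≤ δ * (x j0 - M) := by
      apply mul_le_mul_of_nonpos_right (hA i j0)
      have := Finset.le_sup' x (mem_univ j0); linarith
    rw [h1]
    have hxj0 : x j0 = m := hj0.symm
    rw [hxj0] at h2 h3
    linarith
  have hlo : ∀ i, m + δ * (M - m) ≤ (A *ᵥ x) i := by
    intro i
    have h1 : (A *ᵥ x) i = (∑ k, A i k * (x k - m)) + m := by
      simp only [mulVec, dotProduct, mul_sub, Finset.sum_sub_distrib,
        ← Finset.sum_mul, hrow, one_mul]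
      ring
    have h2 : A i j1 * (x j1 - m) ≤ ∑ k, A i k * (x k - m) := by
      rw [← Finset.sum_erase_add univ _ (mem_univ j1)]
      have : (0:ℝ) ≤ ∑ k ∈ univ.erase j1, A i k * (x k - m) :=
        Finset.sum_nonneg fun k _ => mul_nonneg (hAnn i k)
          (by have := Finset.inf'_le x (mem_univ k); linarith)
      linarith
    have h3 : δ * (x j1 - m) ≤ A i j1 * (x j1 - m) := by
      apply mul_le_mul_of_nonneg_right (hA i j1)
      have := Finset.inf'_le x (mem_univ j1); linarith
    rw [h1]
    have hxj1 : x j1 = M := hj1.symm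
    rw [hxj1] at h2 h3
    linarith
  have hs : univ.sup' univ_nonempty (A *ᵥ x) ≤ M - δ * (M - m) :=
    Finset.sup'_le _ _ fun i _ => hup i
  have hi : m + δ * (M - m) ≤ univ.inf' univ_nonempty (A *ᵥ x) :=
    Finset.le_inf' _ _ fun i _ => hlo i
  linarith

/-- For a self-confidence profile `z ∈ [0,1)ⁿ` (no stubborn agents),
the powers of `Q(z) = (I - [z])P + [z]` converge entrywise to the rank-one
row-stochastic matrix `H(z)` whose every row has entries
`H_{ij}(z) = (π_j/(1 - z_j)) / γ(z)`, where `γ(z) = ∑_k π_k/(1 - z_k)`. -/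
theorem stmt_0 (n : ℕ) (hn : 2 ≤ n)
    (P : Matrix (Fin n) (Fin n) ℝ)
    (hPnn : ∀ i j, 0 ≤ P i j)
    (hProw : ∀ i, ∑ j, P i j = 1)
    (hPdiag : ∀ i, P i i = 0)
    (hPprim : ∃ m : ℕ, ∀ i j, 0 < (P ^ m) i j)
    (π : Fin n → ℝ)
    (hπpos : ∀ i, 0 < π i)
    (hπsum : ∑ i, π i = 1)
    (hπinv : ∀ j, ∑ i, π i * P i j = π j)
    (z : Fin n → ℝ) (hz : ∀ i, z i ∈ Set.Ico (0 : ℝ) 1) :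
    ∀ i j, Tendsto
      (fun t : ℕ => (((1 - Matrix.diagonal z) * P + Matrix.diagonal z) ^ t) i j)
      atTop
      (𝓝 ((π j / (1 - z j)) / (∑ k, π k / (1 - z k)))) := by
  haveI : NeZero n := ⟨by omega⟩
  set Q := (1 - Matrix.diagonal z) * P + Matrix.diagonal z with hQdef
  have hz1 : ∀ i, 0 < 1 - z i := fun i => by have := (hz i).2; linarith
  have hQentry : ∀ i j, Q i j = (1 - z i) * P i j + (if i = j then z i else 0) := by
    intro i j
    have h1 : (1 : Matrix (Fin n) (Fin n) ℝ) - Matrix.diagonal z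
        = Matrix.diagonal (fun i => 1 - z i) := by
      rw [← Matrix.diagonal_one, Matrix.diagonal_sub]
    rw [hQdef, Matrix.add_apply, h1, Matrix.diagonal_mul, Matrix.diagonal_apply]
  have hQnn : ∀ i j, 0 ≤ Q i j := by
    intro i j
    rw [hQentry]
    have := (hz i).1
    have := hz1 i
    have := hPnn i j
    split <;> nlinarith
  have hQrow : ∀ i, ∑ j, Q i j = 1 := by
    intro i
    simp only [hQentry, Finset.sum_add_distrib, ← Finset.mul_sum, hProw,
      Finset.sum_ite_eq univ i (fun _ => z i), mem_univ, if_true]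
    ring
  -- gamma and mu
  set γ := ∑ k, π k / (1 - z k) with hγdef
  have hγpos : 0 < γ :=
    Finset.sum_pos (fun k _ => div_pos (hπpos k) (hz1 k)) univ_nonempty
  set μ : Fin n → ℝ := fun k => (π k / (1 - z k)) / γ with hμdef
  have hμsum : ∑ k, μ k = 1 := by
    rw [hμdef, ← Finset.sum_div, ← hγdef, div_self hγpos.ne']
  have hkey : ∀ i, μ i * (1 - z i) = π i / γ := by
    intro i
    have h1 := (hz1 i).ne'
    have h2 := hγpos.ne'
    rw [hμdef]
    field_simp
  have hμinv : ∀ k, ∑ i, μ i * Q i k = μ k := by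
    intro k
    have h1 : ∀ i, μ i * Q i k
        = (π i * P i k) / γ + (if i = k then μ i * z i else 0) := by
      intro i
      rw [hQentry, mul_add]
      congr 1
      · rw [← mul_assoc, hkey i, div_mul_eq_mul_div]
      · split <;> simp
    rw [Finset.sum_congr rfl fun i _ => h1 i, Finset.sum_add_distrib,
      Finset.sum_ite_eq' univ k (fun i => μ i * z i), ← Finset.sum_div, hπinv k]
    simp only [mem_univ, if_true]
    have := hkey k
    nlinarith
  -- positivity of Q^m
  obtain ⟨m, hm⟩ := hPprim
  set c := univ.inf' univ_nonempty (fun i => 1 - z i) with hcdef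
  have hc : 0 < c := (Finset.lt_inf'_iff _).2 fun i _ => hz1 i
  have hcP : ∀ i j, (c • P) i j ≤ Q i j := by
    intro i j
    rw [hQentry, Matrix.smul_apply, smul_eq_mul]
    have h1 : c ≤ 1 - z i := Finset.inf'_le _ (mem_univ i)
    have h2 := hPnn i j
    have h3 := (hz i).1
    split <;> nlinarith
  have hcPnn : ∀ i j, 0 ≤ (c • P) i j := fun i j => by
    rw [Matrix.smul_apply, smul_eq_mul]; exact mul_nonneg hc.le (hPnn i j)
  have hQm : ∀ i j, 0 < (Q ^ m) i j := by
    intro i j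
    have h1 := pow_mono'' (c • P) Q hcPnn hcP m i j
    have h2 : ((c • P) ^ m) i j = c ^ m * (P ^ m) i j := by
      rw [smul_pow, Matrix.smul_apply, smul_eq_mul]
    have := hm i j
    have := pow_pos hc m
    nlinarith
  set δ := univ.inf' univ_nonempty
    (fun i => univ.inf' univ_nonempty (fun j => (Q ^ m) i j)) with hδdef
  have hδpos : 0 < δ :=
    (Finset.lt_inf'_iff _).2 fun i _ => (Finset.lt_inf'_iff _).2 fun j _ => hQm i j
  have hδle : ∀ i j, δ ≤ (Q ^ m) i j := fun i j =>
    le_trans (Finset.inf'_le _ (mem_univ i)) (Finset.inf'_le _ (mem_univ j))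
  have hQmrow : ∀ i, ∑ j, (Q ^ m) i j = 1 := rowsum_pow Q hQrow m
  intro i j
  -- the column sequences
  set x : ℕ → Fin n → ℝ := fun t i => (Q ^ t) i j with hxdef
  have hx : ∀ s t, x (s + t) = (Q ^ s) *ᵥ (x t) := by
    intro s t
    funext i'
    simp only [hxdef, pow_add, Matrix.mul_apply, mulVec, dotProduct]
  set M : ℕ → ℝ := fun t => univ.sup' univ_nonempty (x t) with hMdef
  set mI : ℕ → ℝ := fun t => univ.inf' univ_nonempty (x t) with hmIdef
  have hManti : Antitone M := by
    apply antitone_nat_of_succ_le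
    intro t
    have : x (t + 1) = Q *ᵥ x t := by rw [add_comm, hx 1 t, pow_one]
    apply Finset.sup'_le
    intro i' _
    rw [show x (t+1) i' = (Q *ᵥ x t) i' by rw [this]]
    exact mulVec_le_sup Q hQnn hQrow (x t) i'
  have hmmono : Monotone mI := by
    apply monotone_nat_of_le_succ
    intro t
    have : x (t + 1) = Q *ᵥ x t := by rw [add_comm, hx 1 t, pow_one]
    apply Finset.le_inf'
    intro i' _
    rw [show x (t+1) i' = (Q *ᵥ x t) i' by rw [this]]
    exact inf_le_mulVec Q hQnn hQrow (x t) i'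
  have hmM : ∀ t, mI t ≤ M t := by
    intro t
    exact le_trans (Finset.inf'_le (x t) (mem_univ i))
      (Finset.le_sup' (x t) (mem_univ i))
  set d : ℕ → ℝ := fun t => M t - mI t with hddef
  have hd0 : ∀ t, 0 ≤ d t := fun t => by have := hmM t; simp [hddef]; linarith
  have hdanti : Antitone d := fun s t hst => by
    have h1 := hManti hst
    have h2 := hmmono hst
    simp only [hddef]; linarith
  have hcontr : ∀ t, d (m + t) ≤ (1 - 2 * δ) * d t := by
    intro t
    have hxm : x (m + t) = (Q ^ m) *ᵥ x t := hx m t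
    have := osc_contract (Q ^ m) δ hδpos.le hδle hQmrow (x t)
    simp only [hddef, hMdef, hmIdef, hxm]
    exact this
  -- d tends to 0
  have hdbdd : BddBelow (Set.range d) := ⟨0, by rintro y ⟨t, rfl⟩; exact hd0 t⟩
  have hdL : Tendsto d atTop (𝓝 (⨅ t, d t)) := tendsto_atTop_ciInf hdanti hdbdd
  set L := ⨅ t, d t with hLdef
  have hL0 : 0 ≤ L := le_ciInf fun t => hd0 t
  have hshift : Tendsto (fun t => d (m + t)) atTop (𝓝 L) := by
    have h1 : Tendsto (fun t : ℕ => m + t) atTop atTop := by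
      simpa [add_comm] using tendsto_add_atTop_nat m
    exact hdL.comp h1
  have hrd : Tendsto (fun t => (1 - 2 * δ) * d t) atTop (𝓝 ((1 - 2 * δ) * L)) :=
    hdL.const_mul _
  have hLle : L ≤ (1 - 2 * δ) * L := le_of_tendsto_of_tendsto' hshift hrd hcontr
  have hLzero : L = 0 := by nlinarith
  have hdzero : Tendsto d atTop (𝓝 0) := hLzero ▸ hdL
  -- mI converges
  have hmbdd : BddAbove (Set.range mI) :=
    ⟨M 0, by rintro y ⟨t, rfl⟩; exact le_trans (hmM t) (hManti (Nat.zero_le t))⟩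
  set cc := ⨆ t, mI t with hccdef
  have hmc : Tendsto mI atTop (𝓝 cc) := tendsto_atTop_ciSup hmmono hmbdd
  have hMc : Tendsto M atTop (𝓝 cc) := by
    have : Tendsto (fun t => mI t + d t) atTop (𝓝 (cc + 0)) := hmc.add hdzero
    simpa [hddef] using this
  -- each entry converges to cc
  have hxc : ∀ i', Tendsto (fun t => x t i') atTop (𝓝 cc) := by
    intro i'
    refine tendsto_of_tendsto_of_tendsto_of_le_of_le hmc hMc
      (fun t => Finset.inf'_le (x t) (mem_univ i'))
      (fun t => Finset.le_sup' (x t) (mem_univ i'))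
  -- identification of the limit
  have hsum : ∀ t, ∑ i', μ i' * x t i' = μ j := by
    intro t
    induction t with
    | zero =>
      simp only [hxdef, pow_zero, Matrix.one_apply]
      rw [Finset.sum_congr rfl (fun i' _ => by rw [mul_ite, mul_one, mul_zero]),
        Finset.sum_ite_eq' univ j μ]
      simp
    | succ t ih =>
      have hx1 : x (t + 1) = Q *ᵥ x t := by rw [add_comm, hx 1 t, pow_one]
      calc ∑ i', μ i' * x (t + 1) i' = ∑ i', μ i' * ∑ k, Q i' k * x t k := by
            simp [hx1, mulVec, dotProduct]
        _ = ∑ k, (∑ i', μ i' * Q i' k) * x t k := by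
            simp only [Finset.mul_sum, Finset.sum_mul, mul_assoc]
            exact Finset.sum_comm
        _ = ∑ k, μ k * x t k := by
            exact Finset.sum_congr rfl fun k _ => by rw [hμinv k]
        _ = μ j := ih
  have hlim : Tendsto (fun t => ∑ i', μ i' * x t i') atTop (𝓝 (∑ i', μ i' * cc)) :=
    tendsto_finset_sum _ fun i' _ => (hxc i').const_mul (μ i')
  have heq : (∑ i', μ i' * cc) = μ j := by
    have hconst : Tendsto (fun _ : ℕ => μ j) atTop (𝓝 (μ j)) := tendsto_const_nhds
    have : Tendsto (fun t => ∑ i', μ i' * x t i') atTop (𝓝 (μ j)) := by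
      simpa [hsum] using hconst
    exact tendsto_nhds_unique hlim this
  have hcc : cc = μ j := by
    rw [← heq, ← Finset.sum_mul, hμsum, one_mul]
  have := hxc i
  rw [hcc] at this
  exact this
end

section
/- Fix an agent k and values z_j ∈ [0,1) for all j ≠ k, and set a = ∑_{j≠k} π_j/(1 − z_j) and b = ∑_{j≠k} π_j² σ_j²/(1 − z_j)² (both strictly positive since n ≥ 2). Define f : [0,1] → ℝ by f(t) = (π_k² σ_k²/(1 − t)² + b)/(π_k/(1 − t) + a)² for t ∈ [0,1) and f(1) = σ_k². Then f is continuous on [0,1] and has a unique minimizer over [0,1], equal to t* = max{0, 1 − a π_k σ_k²/b}; i.e., f(t*) < f(t) for every t ∈ [0,1] with t ≠ t*. -/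
open Matrix Filter Topology Finset

/-- Fix an agent `k` and values `z_j ∈ [0,1)` for `j ≠ k`, and set
`a = ∑_{j≠k} π_j/(1 - z_j)` and `b = ∑_{j≠k} π_j² σ_j²/(1 - z_j)²`. The asymptotic
estimation cost `f(t) = (π_k² σ_k²/(1-t)² + b)/(π_k/(1-t) + a)²` for `t ∈ [0,1)`,
with `f(1) = σ_k²`, is continuous on `[0,1]` and has the unique minimizer
`t* = max{0, 1 - a π_k σ_k²/b}` over `[0,1]`. -/
theorem stmt_3 (n : ℕ) (hn : 2 ≤ n)
    (π σ2 : Fin n → ℝ) (hπpos : ∀ i, 0 < π i) (hσ : ∀ i, 0 < σ2 i)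
    (k : Fin n) (z : Fin n → ℝ) (hz : ∀ j, j ≠ k → z j ∈ Set.Ico (0 : ℝ) 1)
    (a b : ℝ)
    (ha : a = ∑ j ∈ Finset.univ.erase k, π j / (1 - z j))
    (hb : b = ∑ j ∈ Finset.univ.erase k, (π j) ^ 2 * σ2 j / (1 - z j) ^ 2)
    (f : ℝ → ℝ)
    (hf : ∀ t ∈ Set.Ico (0 : ℝ) 1,
      f t = ((π k) ^ 2 * σ2 k / (1 - t) ^ 2 + b) / (π k / (1 - t) + a) ^ 2)
    (hf1 : f 1 = σ2 k) :
    (0 < a) ∧ (0 < b) ∧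
    ContinuousOn f (Set.Icc (0 : ℝ) 1) ∧
    (max 0 (1 - a * π k * σ2 k / b) ∈ Set.Icc (0 : ℝ) 1) ∧
    (∀ t ∈ Set.Icc (0 : ℝ) 1, t ≠ max 0 (1 - a * π k * σ2 k / b) →
      f (max 0 (1 - a * π k * σ2 k / b)) < f t) := by
  have hc : 0 < π k := hπpos k
  have hs : 0 < σ2 k := hσ k
  have : Nontrivial (Fin n) := Fin.nontrivial_iff_two_le.mpr hn
  obtain ⟨j0, hj0⟩ := exists_ne k
  have hane : (Finset.univ.erase k).Nonempty :=
    ⟨j0, Finset.mem_erase.mpr ⟨hj0, Finset.mem_univ j0⟩⟩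
  have hzpos : ∀ j ∈ Finset.univ.erase k, (0:ℝ) < 1 - z j := by
    intro j hj
    have := (hz j (Finset.ne_of_mem_erase hj)).2
    linarith
  have hA : 0 < a := by
    rw [ha]
    exact Finset.sum_pos (fun j hj => div_pos (hπpos j) (hzpos j hj)) hane
  have hB : 0 < b := by
    rw [hb]
    refine Finset.sum_pos (fun j hj => div_pos ?_ (pow_pos (hzpos j hj) 2)) hane
    exact mul_pos (pow_pos (hπpos j) 2) (hσ j)
  -- the smooth extension
  set c := π k with hcdef
  set s := σ2 k with hsdef
  set F : ℝ → ℝ := fun t => (s * c ^ 2 + b * (1 - t) ^ 2) / (c + a * (1 - t)) ^ 2 with hFdef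
  have hden : ∀ t ∈ Set.Icc (0:ℝ) 1, 0 < c + a * (1 - t) := by
    intro t ht
    have h1 : 0 ≤ 1 - t := by linarith [ht.2]
    nlinarith [mul_nonneg hA.le h1]
  have hFeq : ∀ t ∈ Set.Icc (0:ℝ) 1, f t = F t := by
    intro t ht
    rcases eq_or_lt_of_le ht.2 with h1 | h1
    · rw [h1, hf1, hFdef]
      show s = (s * c ^ 2 + b * (1 - 1) ^ 2) / (c + a * (1 - 1)) ^ 2
      rw [eq_div_iff (by positivity)]
      ring
    · have hmem : t ∈ Set.Ico (0:ℝ) 1 := ⟨ht.1, h1⟩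
      rw [hf t hmem, hFdef]
      have h0 : (1:ℝ) - t ≠ 0 := by linarith
      have h0' : (0:ℝ) < 1 - t := by linarith
      have h2 : c / (1 - t) + a ≠ 0 := (add_pos (div_pos hc h0') hA).ne'
      have h3 : c + a * (1 - t) ≠ 0 := (hden t ht).ne'
      field_simp
  have hFcont : ContinuousOn F (Set.Icc (0:ℝ) 1) := by
    apply ContinuousOn.div
    · fun_prop
    · fun_prop
    · intro t ht
      exact (pow_pos (hden t ht) 2).ne'
  refine ⟨hA, hB, hFcont.congr hFeq, ?_, ?_⟩
  · constructor
    · exact le_max_left _ _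
    · apply max_le (by norm_num)
      have : 0 < a * c * s / b := by positivity
      linarith
  · -- main inequality
    intro t ht htne
    set T := max 0 (1 - a * c * s / b) with hTdef
    have hTmem : T ∈ Set.Icc (0:ℝ) 1 := by
      constructor
      · exact le_max_left _ _
      · apply max_le (by norm_num)
        have : 0 < a * c * s / b := by positivity
        linarith
    rw [hFeq t ht, hFeq T hTmem, hFdef]
    simp only
    rw [div_lt_div_iff₀ (pow_pos (hden T hTmem) 2) (pow_pos (hden t ht) 2)]
    rcases le_or_gt b (a * c * s) with hcase | hcase
    · -- T = 0
      have hT0 : T = 0 := by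
        rw [hTdef]
        apply max_eq_left
        have h1 : 1 ≤ a * c * s / b := (one_le_div hB).mpr hcase
        linarith
      rw [hT0]
      have htpos : 0 < t := lt_of_le_of_ne ht.1 (by rw [hT0] at htne; exact fun h => htne h.symm)
      have ht1 : t ≤ 1 := ht.2
      have h1 : 0 < c * t * (t * (c * (2 * a * s * c + a ^ 2 * s - b))) := by
        have : 0 < 2 * a * s * c + a ^ 2 * s - b := by nlinarith
        positivity
      have h2 : 0 ≤ c * t * ((1 - t) * (2 * (c + a) * (a * c * s - b))) := by
        have h3 : 0 ≤ a * c * s - b := by linarith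
        have h4 : 0 ≤ 1 - t := by linarith
        positivity
      have hid1 : (s * c ^ 2 + b * (1 - t) ^ 2) * (c + a * (1 - (0:ℝ))) ^ 2
          - (s * c ^ 2 + b * (1 - (0:ℝ)) ^ 2) * (c + a * (1 - t)) ^ 2
          = c * t * (t * (c * (2 * a * s * c + a ^ 2 * s - b)))
            + c * t * ((1 - t) * (2 * (c + a) * (a * c * s - b))) := by ring
      linarith [h1, h2, hid1]
    · -- T = 1 - a*c*s/b
      have hT1 : T = 1 - a * c * s / b := by
        rw [hTdef]
        apply max_eq_right
        have h1 : a * c * s / b ≤ 1 := (div_le_one hB).mpr hcase.le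
        linarith
      have hv : b * (1 - T) = a * c * s := by
        rw [hT1]
        field_simp
        ring
      set v := 1 - T with hvdef
      set w := 1 - t with hwdef
      have hvw : v ≠ w := by
        intro h
        apply htne
        have : t = T := by rw [hvdef, hwdef] at h; linarith
        exact this
    -- goal : (s*c^2 + b*v^2)*(c+a*w)^2 < (s*c^2+b*w^2)*(c+a*v)^2
      have hkey : 0 < b ^ 2 * ((s * c ^ 2 + b * w ^ 2) * (c + a * v) ^ 2)
          - b ^ 2 * ((s * c ^ 2 + b * v ^ 2) * (c + a * w) ^ 2) := by
        have e1 : b ^ 2 * ((s * c ^ 2 + b * w ^ 2) * (c + a * v) ^ 2)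
            = (s * c ^ 2 + b * w ^ 2) * (b * c + a * (a * c * s)) ^ 2 := by
          have : b * c + a * (a * c * s) = b * c + a * (b * v) := by rw [hv]
          rw [this]; ring
        have e2 : b ^ 2 * ((s * c ^ 2 + b * v ^ 2) * (c + a * w) ^ 2)
            = (s * c ^ 2 * b ^ 2 + b * (a * c * s) ^ 2) * (c + a * w) ^ 2 := by
          rw [← hv]; ring
        rw [e1, e2]
        have hne : a * c * s - b * w ≠ 0 := by
          rw [← hv]
          intro h
          exact hvw (mul_left_cancel₀ hB.ne' (by linarith))
        have hpos : 0 < c ^ 2 * (a ^ 2 * s + b) * (a * c * s - b * w) ^ 2 := by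
          have := pow_pos (abs_pos.mpr hne) 2
          rw [sq_abs] at this
          positivity
        have hid : (s * c ^ 2 + b * w ^ 2) * (b * c + a * (a * c * s)) ^ 2
            - (s * c ^ 2 * b ^ 2 + b * (a * c * s) ^ 2) * (c + a * w) ^ 2
            = c ^ 2 * (a ^ 2 * s + b) * (a * c * s - b * w) ^ 2 := by ring
        linarith [hpos, hid]
      exact lt_of_mul_lt_mul_left (by linarith [hkey]) (by positivity : (0:ℝ) ≤ b ^ 2)
end

section
/- Fix an agent k and let z, z̄ ∈ [0,1]^n coincide in all coordinates except possibly coordinate k, with z_k, z̄_k ∈ [0,1) and with S(z) = S(z̄) = S(z_{−k}) ≠ ∅. Then row k of H(z) equals row k of H(z̄); consequently v_k(z_k, z_{−k}) is constant as a function of z_k over [0,1). -/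
/-!
A limit `L` of the powers of `Q(w) = (I - [w]) P + [w]` satisfies `Q(w) L = L`, while the rows of
the stubborn agents of every power of `Q(w)` are rows of the identity. Hence each column of `L` is
`P`-harmonic off the stubborn set `S(w)` and takes prescribed values on it. For two profiles with
the same stubborn set, the difference of the limits is, column by column, harmonic off `S` and zero
on `S`; since `S` is reachable from every agent under the primitive matrix `P`, it vanishes by the
maximum principle. So `H(z)` depends on `z` only through `S(z)`, which does not change as `z_k`
moves in `[0,1)`.
-/

open Matrix Filter Topology

theorem mul_eq_of_tendsto_pow {M : Type*} [Monoid M] [TopologicalSpace M] [ContinuousMul M]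
    [T2Space M] {a L : M} (h : Tendsto (a ^ ·) atTop (𝓝 L)) : a * L = L :=
  tendsto_nhds_unique (h.const_mul a) <|
    (h.comp (tendsto_add_atTop_nat 1)).congr fun t => pow_succ' a t

namespace Matrix

variable {ι : Type*} [Fintype ι]

def HarmonicOff (P : Matrix ι ι ℝ) (S : Set ι) (f : ι → ℝ) : Prop :=
  ∀ i ∉ S, (P *ᵥ f) i = f i

section HarmonicOff

variable {P : Matrix ι ι ℝ} {S : Set ι} {f g : ι → ℝ}

theorem HarmonicOff.neg (hf : HarmonicOff P S f) : HarmonicOff P S (-f) := fun i hi => by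
  rw [mulVec_neg, Pi.neg_apply, Pi.neg_apply, hf i hi]

theorem HarmonicOff.sub (hf : HarmonicOff P S f) (hg : HarmonicOff P S g) :
    HarmonicOff P S (f - g) := fun i hi => by
  rw [mulVec_sub, Pi.sub_apply, Pi.sub_apply, hf i hi, hg i hi]

variable [DecidableEq ι]

theorem mem_of_pow_apply_pos (hP : ∀ i j, 0 ≤ P i j) {T : Set ι}
    (hT : ∀ a ∈ T, ∀ l, 0 < P a l → l ∈ T) {i : ι} (hi : i ∈ T) :
    ∀ {t : ℕ} {l : ι}, 0 < (P ^ t) i l → l ∈ T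
  | 0, l, h => by
    obtain rfl : i = l := by
      by_contra hil
      simp [one_apply_ne hil] at h
    exact hi
  | t + 1, l, h => by
    rw [pow_succ, mul_apply] at h
    obtain ⟨a, -, ha⟩ := (Finset.sum_pos_iff_of_nonneg fun a _ =>
      mul_nonneg (pow_apply_nonneg hP t i a) (hP a l)).1 h
    exact hT a (mem_of_pow_apply_pos hP hT hi (pos_of_mul_pos_left ha (hP a l))) l
      (pos_of_mul_pos_right ha (pow_apply_nonneg hP t i a))

theorem apply_eq_of_mulVec_apply_eq_of_forall_le (hP : P ∈ rowStochastic ℝ ι) {a : ι}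
    (ha : (P *ᵥ f) a = f a) (hmax : ∀ l, f l ≤ f a) {l : ι} (hl : 0 < P a l) : f l = f a := by
  have hsum : ∑ l, P a l * (f a - f l) = 0 := by
    simp only [mul_sub, Finset.sum_sub_distrib, ← Finset.sum_mul, sum_row_of_mem_rowStochastic hP]
    rw [← ha]
    simp [mulVec, dotProduct]
  have := (Finset.sum_eq_zero_iff_of_nonneg fun l _ =>
    mul_nonneg (nonneg_of_mem_rowStochastic hP) (sub_nonneg.2 (hmax l))).1 hsum l
    (Finset.mem_univ l)
  linarith [(mul_eq_zero.1 this).resolve_left hl.ne']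

theorem HarmonicOff.nonpos (hP : P ∈ rowStochastic ℝ ι)
    (hreach : ∀ i, ∃ j ∈ S, ∃ t, 0 < (P ^ t) i j) (hf : HarmonicOff P S f)
    (hS : ∀ i ∈ S, f i = 0) (i : ι) : f i ≤ 0 := by
  obtain ⟨a, -, hmax⟩ := Finset.exists_max_image Finset.univ f ⟨i, Finset.mem_univ i⟩
  by_contra! hi
  have hpos : 0 < f a := hi.trans_le (hmax i (Finset.mem_univ i))
  -- A maximiser of `f` lies outside `S`, so all its `P`-successors are maximisers too.
  have hT : ∀ b ∈ {l | f l = f a}, ∀ l, 0 < P b l → l ∈ {l | f l = f a} := by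
    intro b (hb : f b = f a) l hl
    have hbS : b ∉ S := fun h => by linarith [hS b h]
    exact (apply_eq_of_mulVec_apply_eq_of_forall_le hP (hf b hbS)
      (fun l => hb ▸ hmax l (Finset.mem_univ l)) hl).trans hb
  obtain ⟨j, hjS, t, ht⟩ := hreach a
  have hj : f j = f a := mem_of_pow_apply_pos (fun _ _ => nonneg_of_mem_rowStochastic hP) hT rfl ht
  linarith [hS j hjS]

theorem HarmonicOff.eq_zero (hP : P ∈ rowStochastic ℝ ι)
    (hreach : ∀ i, ∃ j ∈ S, ∃ t, 0 < (P ^ t) i j) (hf : HarmonicOff P S f)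
    (hS : ∀ i ∈ S, f i = 0) : f = 0 := funext fun i =>
  le_antisymm (hf.nonpos hP hreach hS i) <| neg_nonpos.1 <|
    hf.neg.nonpos hP hreach (fun i hi => by simp [hS i hi]) i

end HarmonicOff

theorem pow_apply_eq_one_apply {R : Type*} [Semiring R] [DecidableEq ι] {A : Matrix ι ι R} {i : ι}
    (hA : ∀ j, A i j = (1 : Matrix ι ι R) i j) (t : ℕ) (j : ι) :
    (A ^ t) i j = (1 : Matrix ι ι R) i j := by
  induction t generalizing j with
  | zero => rfl
  | succ t ih =>
    rw [pow_succ', mul_apply]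
    simp_rw [hA, ← mul_apply, one_mul, ih]

def withSelfConfidence [DecidableEq ι] (P : Matrix ι ι ℝ) (w : ι → ℝ) : Matrix ι ι ℝ :=
  (1 - diagonal w) * P + diagonal w

section withSelfConfidence

variable [DecidableEq ι] {P L : Matrix ι ι ℝ} {w : ι → ℝ}

theorem withSelfConfidence_apply_of_eq_one {i : ι} (hw : w i = 1) (j : ι) :
    P.withSelfConfidence w i j = (1 : Matrix ι ι ℝ) i j := by
  simp [withSelfConfidence, sub_mul, diagonal_mul, diagonal_apply, one_apply, hw]

theorem apply_of_tendsto_pow_withSelfConfidence_of_eq_one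
    (hL : Tendsto (P.withSelfConfidence w ^ ·) atTop (𝓝 L)) {i : ι} (hw : w i = 1) (j : ι) :
    L i j = (1 : Matrix ι ι ℝ) i j := by
  have := (hL.apply_nhds i).apply_nhds j
  simp_rw [pow_apply_eq_one_apply (withSelfConfidence_apply_of_eq_one hw)] at this
  exact tendsto_nhds_unique this tendsto_const_nhds

theorem harmonicOff_of_tendsto_pow_withSelfConfidence
    (hL : Tendsto (P.withSelfConfidence w ^ ·) atTop (𝓝 L)) (j : ι) :
    HarmonicOff P {i | w i = 1} (fun i => L i j) := by
  intro i (hi : w i ≠ 1)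
  have h : (1 - diagonal w) * (P * L - L) = 0 := by
    rw [← sub_eq_zero.2 (mul_eq_of_tendsto_pow hL), withSelfConfidence]
    noncomm_ring
  have := congrFun₂ h i j
  rw [sub_mul, one_mul, Matrix.sub_apply, diagonal_mul, ← one_sub_mul, Matrix.zero_apply] at this
  exact sub_eq_zero.1 ((mul_eq_zero.1 this).resolve_left (sub_ne_zero.2 hi.symm))

theorem eq_of_tendsto_pow_withSelfConfidence (hP : P ∈ rowStochastic ℝ ι) {w' : ι → ℝ}
    {L' : Matrix ι ι ℝ} (hreach : ∀ i, ∃ j, w j = 1 ∧ ∃ t, 0 < (P ^ t) i j)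
    (hww' : ∀ i, w' i = 1 ↔ w i = 1)
    (hL : Tendsto (P.withSelfConfidence w ^ ·) atTop (𝓝 L))
    (hL' : Tendsto (P.withSelfConfidence w' ^ ·) atTop (𝓝 L')) : L = L' := by
  ext i j
  have hS : {i | w' i = 1} = {i | w i = 1} := Set.ext hww'
  have hf := (harmonicOff_of_tendsto_pow_withSelfConfidence hL j).sub
    (hS ▸ harmonicOff_of_tendsto_pow_withSelfConfidence hL' j)
  refine sub_eq_zero.1 (congrFun (hf.eq_zero hP hreach fun l (hl : w l = 1) => ?_) i)
  rw [Pi.sub_apply, apply_of_tendsto_pow_withSelfConfidence_of_eq_one hL hl,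
    apply_of_tendsto_pow_withSelfConfidence_of_eq_one hL' ((hww' l).2 hl), sub_self]

end withSelfConfidence

end Matrix

theorem stmt_5_general (n : ℕ)
    (P : Matrix (Fin n) (Fin n) ℝ)
    (hPnn : ∀ i j, 0 ≤ P i j)
    (hProw : ∀ i, ∑ j, P i j = 1)
    (hPprim : ∃ m : ℕ, ∀ i j, 0 < (P ^ m) i j)
    (σ2 : Fin n → ℝ)
    (H : (Fin n → ℝ) → Matrix (Fin n) (Fin n) ℝ)
    (hH : ∀ z : Fin n → ℝ, (∀ i, z i ∈ Set.Icc (0 : ℝ) 1) →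
      ∀ i j, Tendsto
        (fun t : ℕ => (((1 - Matrix.diagonal z) * P + Matrix.diagonal z) ^ t) i j)
        atTop (𝓝 (H z i j)))
    (k : Fin n) (z zb : Fin n → ℝ)
    (hz : ∀ i, z i ∈ Set.Icc (0 : ℝ) 1) (hzb : ∀ i, zb i ∈ Set.Icc (0 : ℝ) 1)
    (hco : ∀ j, j ≠ k → zb j = z j)
    (hzk : z k ∈ Set.Ico (0 : ℝ) 1) (hzbk : zb k ∈ Set.Ico (0 : ℝ) 1)
    (hS : ∃ j, j ≠ k ∧ z j = 1) :
    (∀ j, H z k j = H zb k j) ∧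
    (∑ j, (H z k j) ^ 2 * σ2 j = ∑ j, (H zb k j) ^ 2 * σ2 j) := by
  obtain ⟨m, hPm⟩ := hPprim
  obtain ⟨j₀, -, hj₀⟩ := hS
  have hP : P ∈ rowStochastic ℝ (Fin n) := mem_rowStochastic_iff_sum.2 ⟨hPnn, hProw⟩
  have hstubborn : ∀ i, zb i = 1 ↔ z i = 1 := fun i => by
    rcases eq_or_ne i k with rfl | hik
    · exact iff_of_false hzbk.2.ne hzk.2.ne
    · rw [hco i hik]
  have hlim : ∀ w, (∀ i, w i ∈ Set.Icc (0 : ℝ) 1) →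
      Tendsto (P.withSelfConfidence w ^ ·) atTop (𝓝 (H w)) := fun w hw =>
    tendsto_pi_nhds.2 fun i => tendsto_pi_nhds.2 (hH w hw i)
  have hHz : H z = H zb := eq_of_tendsto_pow_withSelfConfidence hP
    (fun i => ⟨j₀, hj₀, m, hPm i j₀⟩) hstubborn (hlim z hz) (hlim zb hzb)
  exact ⟨fun j => by rw [hHz], by rw [hHz]⟩

/-- Fix an agent `k` and let `z, z̄ ∈ [0,1]ⁿ` coincide in all coordinates
except possibly coordinate `k`, with `z_k, z̄_k ∈ [0,1)` and with
`S(z) = S(z̄) = S(z_{-k}) ≠ ∅`. Then row `k` of `H(z)` equals row `k` of `H(z̄)`;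
consequently `v_k(z_k, z_{-k})` is constant in `z_k` over `[0,1)`. -/
theorem stmt_5 (n : ℕ) (hn : 2 ≤ n)
    (P : Matrix (Fin n) (Fin n) ℝ)
    (hPnn : ∀ i j, 0 ≤ P i j)
    (hProw : ∀ i, ∑ j, P i j = 1)
    (hPdiag : ∀ i, P i i = 0)
    (hPprim : ∃ m : ℕ, ∀ i j, 0 < (P ^ m) i j)
    (σ2 : Fin n → ℝ) (hσ : ∀ i, 0 < σ2 i)
    (H : (Fin n → ℝ) → Matrix (Fin n) (Fin n) ℝ)
    (hH : ∀ z : Fin n → ℝ, (∀ i, z i ∈ Set.Icc (0 : ℝ) 1) →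
      ∀ i j, Tendsto
        (fun t : ℕ => (((1 - Matrix.diagonal z) * P + Matrix.diagonal z) ^ t) i j)
        atTop (𝓝 (H z i j)))
    (k : Fin n) (z zb : Fin n → ℝ)
    (hz : ∀ i, z i ∈ Set.Icc (0 : ℝ) 1) (hzb : ∀ i, zb i ∈ Set.Icc (0 : ℝ) 1)
    (hco : ∀ j, j ≠ k → zb j = z j)
    (hzk : z k ∈ Set.Ico (0 : ℝ) 1) (hzbk : zb k ∈ Set.Ico (0 : ℝ) 1)
    (hS : ∃ j, j ≠ k ∧ z j = 1) :
    (∀ j, H z k j = H zb k j) ∧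
    (∑ j, (H z k j) ^ 2 * σ2 j = ∑ j, (H zb k j) ^ 2 * σ2 j) :=
  stmt_5_general n P hPnn hProw hPprim σ2 H hH k z zb hz hzb hco hzk hzbk hS
end

section
/- Fix an agent k and values z_j ∈ [0,1] for j ≠ k such that S(z_{−k}) = {j ≠ k : z_j = 1} is nonempty, and suppose σ_k² > σ_i² for every i ∈ S(z_{−k}). Then for every z_k ∈ [0,1), v_k(z_k, z_{−k}) < σ_k² = v_k(1, z_{−k}); consequently the best response set of agent k, B_k(z_{−k}) = argmin_{z_k ∈ [0,1]} v_k(z_k, z_{−k}), equals [0,1). -/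
/-!
Write `H = lim Q(z)^t`. Then `Q H = H`, the rows of `H` at stubborn agents are unit rows, and by
primitivity every agent reaches a stubborn one under some power of `Q`; a maximum principle then
shows that a `Q`-harmonic vector vanishing on `S(z)` is zero. Applied to the columns of `H` at
non-stubborn agents, it shows that for `z_k < 1` row `k` of `H` is a probability vector carried by
`S(z_{-k})`, whence `v_k = ∑ H_kj² σ_j² ≤ ∑ H_kj σ_j² < σ_k²`. For `z_k < 1` harmonicity at `k`
reads `H_k = (P H)_k`, which does not involve `z_k`; so the difference of the limits for two such
values of `z_k` is harmonic for one matrix and vanishes on `S`, and `v_k` is constant on `[0,1)`.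
-/

open Matrix Filter Topology Finset Function

namespace Matrix

variable {ι : Type*} [Fintype ι] [DecidableEq ι]

theorem isClosed_rowStochastic {R : Type*} [Semiring R] [PartialOrder R] [IsOrderedRing R]
    [TopologicalSpace R] [OrderClosedTopology R] [IsTopologicalSemiring R] :
    IsClosed (rowStochastic R ι : Set (Matrix ι ι R)) := by
  have hset : (rowStochastic R ι : Set (Matrix ι ι R)) =
      (⋂ i, ⋂ j, {M | 0 ≤ M i j}) ∩ {M | M *ᵥ 1 = 1} := by
    ext M
    simp [mem_rowStochastic]
  rw [hset]
  exact (isClosed_iInter fun i => isClosed_iInter fun j =>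
      isClosed_le continuous_const (continuous_id.matrix_elem i j)).inter
    (isClosed_eq (continuous_id.matrix_mulVec continuous_const) continuous_const)

section Semiring

variable {R : Type*} [Semiring R] {M : Matrix ι ι R} {i : ι}

theorem mul_row_eq_of_row_eq_one (h : M i = (1 : Matrix ι ι R) i) (N : Matrix ι ι R) :
    (M * N) i = N i := by
  ext j
  simp only [mul_apply, h]
  rw [← mul_apply, one_mul]

theorem pow_row_eq_one_of_row_eq_one (h : M i = (1 : Matrix ι ι R) i) (r : ℕ) :
    (M ^ r) i = (1 : Matrix ι ι R) i := by
  induction r with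
  | zero => rw [pow_zero]
  | succ r ih => rw [pow_succ', mul_row_eq_of_row_eq_one h, ih]

theorem pow_mulVec_eq_self {v : ι → R} (hv : M *ᵥ v = v) (r : ℕ) : M ^ r *ᵥ v = v := by
  induction r with
  | zero => rw [pow_zero, one_mulVec]
  | succ r ih => rw [pow_succ, ← mulVec_mulVec, hv, ih]

variable [TopologicalSpace R] [T2Space R] {A : Matrix ι ι R}

theorem mul_eq_self_of_tendsto_pow [IsTopologicalSemiring R]
    (hA : Tendsto (fun r => M ^ r) atTop (𝓝 A)) : M * A = A := by
  have hshift : Tendsto (fun r => M * M ^ r) atTop (𝓝 A) := by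
    simpa only [comp_def, pow_succ'] using hA.comp (tendsto_add_atTop_nat 1)
  exact tendsto_nhds_unique (((continuous_const.matrix_mul continuous_id).tendsto A).comp hA)
    hshift

theorem row_eq_one_of_tendsto_pow (hA : Tendsto (fun r => M ^ r) atTop (𝓝 A))
    (h : M i = (1 : Matrix ι ι R) i) : A i = (1 : Matrix ι ι R) i := by
  have hrow : Tendsto (fun r => (M ^ r) i) atTop (𝓝 (A i)) :=
    ((continuous_apply i).tendsto A).comp hA
  simp only [pow_row_eq_one_of_row_eq_one h] at hrow
  exact (tendsto_const_nhds_iff.1 hrow).symm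

end Semiring

theorem mem_rowStochastic_of_tendsto_pow {M A : Matrix ι ι ℝ} (hM : M ∈ rowStochastic ℝ ι)
    (hA : Tendsto (fun r => M ^ r) atTop (𝓝 A)) : A ∈ rowStochastic ℝ ι :=
  isClosed_rowStochastic.mem_of_tendsto hA (Eventually.of_forall fun r => pow_mem hM r)

/-- Maximum principle: at a point `b` where `|v|` is maximal, `|v b|` is at most the average of
`|v|` under `(M ^ m) b`, which puts positive weight on a zero of `v`. -/
theorem eq_zero_of_mulVec_eq_self {M : Matrix ι ι ℝ} (hM : M ∈ rowStochastic ℝ ι) {v : ι → ℝ}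
    (hv : M *ᵥ v = v) {m : ℕ} (hreach : ∀ i, ∃ s, v s = 0 ∧ 0 < (M ^ m) i s) : v = 0 := by
  rcases isEmpty_or_nonempty ι with _ | _
  · exact Subsingleton.elim _ _
  obtain ⟨b, -, hb⟩ := exists_max_image univ (fun i => |v i|) univ_nonempty
  obtain ⟨s, hs, hbs⟩ := hreach b
  have hN := pow_mem hM m
  have hNv := pow_mulVec_eq_self hv m
  have key : |v b| ≤ |v b| - (M ^ m) b s * |v b| := calc
    |v b| = |∑ j, (M ^ m) b j * v j| := by rw [← congrFun hNv b]; rfl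
    _ ≤ ∑ j, (M ^ m) b j * |v j| := by
      refine (abs_sum_le_sum_abs _ _).trans_eq (sum_congr rfl fun j _ => ?_)
      rw [abs_mul, abs_of_nonneg (hN.1 b j)]
    _ ≤ ∑ j, (M ^ m) b j * (|v b| - if j = s then |v b| else 0) := by
      refine sum_le_sum fun j _ => mul_le_mul_of_nonneg_left ?_ (hN.1 b j)
      split_ifs with hjs
      · simp [hjs, hs]
      · simpa using hb j (mem_univ j)
    _ = |v b| - (M ^ m) b s * |v b| := by
      simp only [mul_sub, sum_sub_distrib, ← sum_mul, sum_row_of_mem_rowStochastic hN, one_mul,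
        mul_ite, mul_zero, sum_ite_eq', mem_univ, if_true]
  have hvb : |v b| ≤ 0 := by nlinarith [abs_nonneg (v b)]
  funext i
  exact abs_nonpos_iff.1 ((hb i (mem_univ i)).trans hvb)

end Matrix

theorem sum_sq_mul_lt_of_sum_eq_one {ι : Type*} [Fintype ι] {a σ : ι → ℝ} {c : ℝ}
    (ha : ∀ j, 0 ≤ a j) (hsum : ∑ j, a j = 1) (hσ : ∀ j, a j ≠ 0 → 0 ≤ σ j ∧ σ j < c) :
    ∑ j, a j ^ 2 * σ j < c := by
  have hle : ∀ j, a j ≤ 1 := fun j => hsum ▸ single_le_sum (fun l _ => ha l) (mem_univ j)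
  have hterm : ∀ j, a j ≠ 0 → a j ^ 2 * σ j < a j * c := fun j hj => by
    obtain ⟨hσ0, hσc⟩ := hσ j hj
    have hpos : 0 < a j := (ha j).lt_of_ne' hj
    nlinarith [mul_nonneg (mul_nonneg (ha j) (sub_nonneg.2 (hle j))) hσ0]
  obtain ⟨j₀, -, hj₀⟩ := exists_ne_zero_of_sum_ne_zero (hsum ▸ one_ne_zero : ∑ j, a j ≠ 0)
  calc ∑ j, a j ^ 2 * σ j < ∑ j, a j * c := by
        refine sum_lt_sum (fun j _ => ?_) ⟨j₀, mem_univ _, hterm j₀ hj₀⟩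
        rcases eq_or_ne (a j) 0 with h | h
        · simp [h]
        · exact (hterm j h).le
    _ = c := by rw [← sum_mul, hsum, one_mul]

theorem setOf_forall_le_eq_Ico {α β : Type*} [LinearOrder α] [Preorder β] {f : α → β} {a b : α}
    (hconst : ∀ t ∈ Set.Ico a b, f t = f a) (hlt : f a < f b) :
    {t ∈ Set.Icc a b | ∀ s ∈ Set.Icc a b, f t ≤ f s} = Set.Ico a b := by
  ext t
  constructor
  · rintro ⟨⟨hat, htb⟩, hmin⟩
    refine ⟨hat, htb.lt_of_ne ?_⟩
    rintro rfl
    exact (hmin a ⟨le_rfl, hat⟩).not_gt hlt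
  · rintro ⟨hat, htb⟩
    refine ⟨⟨hat, htb.le⟩, fun s hs => ?_⟩
    rw [hconst t ⟨hat, htb⟩]
    rcases hs.2.lt_or_eq with hsb | rfl
    · rw [hconst s ⟨hs.1, hsb⟩]
    · exact hlt.le

section ConfidenceMatrix

variable {ι : Type*} [Fintype ι] [DecidableEq ι] (P : Matrix ι ι ℝ) {z : ι → ℝ}

def confidenceMatrix (z : ι → ℝ) : Matrix ι ι ℝ :=
  (1 - diagonal z) * P + diagonal z

theorem confidenceMatrix_mul_apply (A : Matrix ι ι ℝ) (i j : ι) :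
    (confidenceMatrix P z * A) i j = (1 - z i) * (P * A) i j + z i * A i j := by
  simp only [confidenceMatrix, add_mul, sub_mul, one_mul, mul_assoc, Matrix.add_apply,
    Matrix.sub_apply, diagonal_mul]

theorem confidenceMatrix_apply (i j : ι) :
    confidenceMatrix P z i j = (1 - z i) * P i j + z i * (1 : Matrix ι ι ℝ) i j := by
  simpa using confidenceMatrix_mul_apply P 1 i j

theorem confidenceMatrix_row_of_eq_one {i : ι} (hi : z i = 1) :
    confidenceMatrix P z i = (1 : Matrix ι ι ℝ) i := by
  ext j
  simp [confidenceMatrix_apply, hi]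

variable {P}

theorem confidenceMatrix_mem_rowStochastic (hP : P ∈ rowStochastic ℝ ι)
    (hz : ∀ i, z i ∈ Set.Icc (0 : ℝ) 1) : confidenceMatrix P z ∈ rowStochastic ℝ ι := by
  have h1 : (1 : Matrix ι ι ℝ) ∈ rowStochastic ℝ ι := one_mem _
  refine mem_rowStochastic_iff_sum.2 ⟨fun i j => ?_, fun i => ?_⟩
  · rw [confidenceMatrix_apply]
    exact add_nonneg (mul_nonneg (sub_nonneg.2 (hz i).2) (hP.1 i j))
      (mul_nonneg (hz i).1 (h1.1 i j))
  · simp only [confidenceMatrix_apply, sum_add_distrib, ← mul_sum, sum_row_of_mem_rowStochastic hP,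
      sum_row_of_mem_rowStochastic h1]
    ring

/-- A path of `P` from `i` to the stubborn agent `s` is followed by `Q(z)` up to its first stubborn
agent, where the walk then stays. -/
theorem exists_pow_confidenceMatrix_pos (hP : P ∈ rowStochastic ℝ ι)
    (hz : ∀ i, z i ∈ Set.Icc (0 : ℝ) 1) {s : ι} (hs : z s = 1) (r : ℕ) (i : ι)
    (hr : 0 < (P ^ r) i s) : ∃ j, z j = 1 ∧ 0 < (confidenceMatrix P z ^ r) i j := by
  induction r generalizing i with
  | zero =>
    obtain rfl : i = s := by
      by_contra h
      simp [one_apply_ne h] at hr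
    exact ⟨i, hs, by simp⟩
  | succ r ih =>
    by_cases hi : z i = 1
    · refine ⟨i, hi, ?_⟩
      simp [pow_row_eq_one_of_row_eq_one (confidenceMatrix_row_of_eq_one P hi)]
    have hQ := confidenceMatrix_mem_rowStochastic hP hz
    rw [pow_succ', mul_apply] at hr
    obtain ⟨l, -, hl⟩ := exists_lt_of_sum_lt (by simpa using hr : ∑ l, (0 : ℝ) < _)
    have hPil : 0 < P i l := pos_of_mul_pos_left hl ((pow_mem hP r).1 l s)
    obtain ⟨j, hj, hlj⟩ := ih l (pos_of_mul_pos_right hl (hP.1 i l))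
    have hQil : 0 < confidenceMatrix P z i l := by
      rw [confidenceMatrix_apply]
      exact add_pos_of_pos_of_nonneg (mul_pos (sub_pos.2 ((hz i).2.lt_of_ne hi)) hPil)
        (mul_nonneg (hz i).1 ((one_mem (rowStochastic ℝ ι)).1 i l))
    refine ⟨j, hj, ?_⟩
    rw [pow_succ', mul_apply]
    exact (mul_pos hQil hlj).trans_le <| single_le_sum
      (f := fun l => confidenceMatrix P z i l * (confidenceMatrix P z ^ r) l j)
      (fun l _ => mul_nonneg (hQ.1 i l) ((pow_mem hQ r).1 l j)) (mem_univ l)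

/-- For `z k < 1` the equation `(Q(z) A)_k = A_k` says `(P A)_k = A_k`, which does not involve
`z k`. -/
theorem confidenceMatrix_update_mul_eq_self {A : Matrix ι ι ℝ} (hA : confidenceMatrix P z * A = A)
    {k : ι} (hk : z k ≠ 1) (t : ℝ) : confidenceMatrix P (update z k t) * A = A := by
  ext i j
  rw [confidenceMatrix_mul_apply]
  rcases eq_or_ne i k with rfl | hik
  · have hAi := congrFun (congrFun hA i) j
    rw [confidenceMatrix_mul_apply] at hAi
    have hPA : (P * A) i j = A i j :=
      mul_left_cancel₀ (sub_ne_zero.2 (Ne.symm hk)) (by linarith)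
    rw [hPA, update_self]
    ring
  · rw [update_of_ne hik, ← confidenceMatrix_mul_apply, hA]

variable {A : Matrix ι ι ℝ} {m : ℕ}

theorem apply_eq_zero_of_tendsto_pow_confidenceMatrix (hP : P ∈ rowStochastic ℝ ι)
    (hz : ∀ i, z i ∈ Set.Icc (0 : ℝ) 1)
    (hA : Tendsto (fun r => confidenceMatrix P z ^ r) atTop (𝓝 A))
    (hreach : ∀ i, ∃ s, z s = 1 ∧ 0 < (confidenceMatrix P z ^ m) i s) (i : ι) {j : ι}
    (hj : z j ≠ 1) : A i j = 0 := by
  have hcol : confidenceMatrix P z *ᵥ (fun l => A l j) = fun l => A l j :=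
    funext fun l => congrFun (congrFun (mul_eq_self_of_tendsto_pow hA) l) j
  refine congrFun (eq_zero_of_mulVec_eq_self (m := m) (confidenceMatrix_mem_rowStochastic hP hz)
    hcol fun l => ?_) i
  obtain ⟨s, hs, hls⟩ := hreach l
  refine ⟨s, ?_, hls⟩
  rw [row_eq_one_of_tendsto_pow hA (confidenceMatrix_row_of_eq_one P hs),
    one_apply_ne (ne_of_apply_ne z (hs.trans_ne hj.symm))]

theorem sum_sq_mul_lt_of_tendsto_pow_confidenceMatrix (hP : P ∈ rowStochastic ℝ ι)
    (hz : ∀ i, z i ∈ Set.Icc (0 : ℝ) 1)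
    (hA : Tendsto (fun r => confidenceMatrix P z ^ r) atTop (𝓝 A))
    (hreach : ∀ i, ∃ s, z s = 1 ∧ 0 < (confidenceMatrix P z ^ m) i s) {σ : ι → ℝ} {c : ℝ}
    (hσ : ∀ j, z j = 1 → 0 ≤ σ j ∧ σ j < c) (i : ι) : ∑ j, A i j ^ 2 * σ j < c := by
  have hA' := mem_rowStochastic_of_tendsto_pow (confidenceMatrix_mem_rowStochastic hP hz) hA
  refine sum_sq_mul_lt_of_sum_eq_one (hA'.1 i) (sum_row_of_mem_rowStochastic hA' i)
    fun j hj => hσ j ?_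
  by_contra hj1
  exact hj (apply_eq_zero_of_tendsto_pow_confidenceMatrix hP hz hA hreach i hj1)

theorem eq_of_tendsto_pow_confidenceMatrix_update (hP : P ∈ rowStochastic ℝ ι)
    {k : ι} {t : ℝ} (hzt : ∀ i, update z k t i ∈ Set.Icc (0 : ℝ) 1) (hk : z k ≠ 1) (ht : t ≠ 1)
    (hA : Tendsto (fun r => confidenceMatrix P z ^ r) atTop (𝓝 A)) {B : Matrix ι ι ℝ}
    (hB : Tendsto (fun r => confidenceMatrix P (update z k t) ^ r) atTop (𝓝 B))
    (hreach : ∀ i, ∃ s, update z k t s = 1 ∧ 0 < (confidenceMatrix P (update z k t) ^ m) i s) :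
    A = B := by
  have hD : confidenceMatrix P (update z k t) * (A - B) = A - B := by
    rw [mul_sub, confidenceMatrix_update_mul_eq_self (mul_eq_self_of_tendsto_pow hA) hk,
      mul_eq_self_of_tendsto_pow hB]
  ext i j
  have hcol : confidenceMatrix P (update z k t) *ᵥ (fun l => (A - B) l j) = fun l => (A - B) l j :=
    funext fun l => congrFun (congrFun hD l) j
  refine sub_eq_zero.1 (congrFun (eq_zero_of_mulVec_eq_self (m := m)
    (confidenceMatrix_mem_rowStochastic hP hzt) hcol fun l => ?_) i)
  obtain ⟨s, hs, hls⟩ := hreach l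
  have hsk : s ≠ k := by
    rintro rfl
    exact ht (by simpa using hs)
  have hzs : z s = 1 := by rwa [update_of_ne hsk] at hs
  refine ⟨s, ?_, hls⟩
  simp [row_eq_one_of_tendsto_pow hA (confidenceMatrix_row_of_eq_one P hzs),
    row_eq_one_of_tendsto_pow hB (confidenceMatrix_row_of_eq_one P hs)]

end ConfidenceMatrix

theorem stmt_6_general (n : ℕ)
    (P : Matrix (Fin n) (Fin n) ℝ)
    (hPnn : ∀ i j, 0 ≤ P i j)
    (hProw : ∀ i, ∑ j, P i j = 1)
    (hPprim : ∃ m : ℕ, ∀ i j, 0 < (P ^ m) i j)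
    (σ2 : Fin n → ℝ) (hσ : ∀ i, 0 < σ2 i)
    (H : (Fin n → ℝ) → Matrix (Fin n) (Fin n) ℝ)
    (hH : ∀ z : Fin n → ℝ, (∀ i, z i ∈ Set.Icc (0 : ℝ) 1) →
      ∀ i j, Tendsto
        (fun t : ℕ => (((1 - Matrix.diagonal z) * P + Matrix.diagonal z) ^ t) i j)
        atTop (𝓝 (H z i j)))
    (k : Fin n) (z : Fin n → ℝ)
    (hz : ∀ j, j ≠ k → z j ∈ Set.Icc (0 : ℝ) 1)
    (hS : ∃ j, j ≠ k ∧ z j = 1)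
    (hσk : ∀ i, i ≠ k → z i = 1 → σ2 i < σ2 k) :
    (∀ t ∈ Set.Ico (0 : ℝ) 1,
      ∑ j, (H (Function.update z k t) k j) ^ 2 * σ2 j < σ2 k) ∧
    (∑ j, (H (Function.update z k 1) k j) ^ 2 * σ2 j = σ2 k) ∧
    ({t ∈ Set.Icc (0 : ℝ) 1 | ∀ s ∈ Set.Icc (0 : ℝ) 1,
        ∑ j, (H (Function.update z k t) k j) ^ 2 * σ2 j ≤
        ∑ j, (H (Function.update z k s) k j) ^ 2 * σ2 j}
      = Set.Ico (0 : ℝ) 1) := by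
  obtain ⟨s, hsk, hs⟩ := hS
  obtain ⟨m, hm⟩ := hPprim
  have hP : P ∈ rowStochastic ℝ (Fin n) := mem_rowStochastic_iff_sum.2 ⟨hPnn, hProw⟩
  have hmem : ∀ t ∈ Set.Icc (0 : ℝ) 1, ∀ i, update z k t i ∈ Set.Icc (0 : ℝ) 1 := fun t ht =>
    (forall_update_iff z fun _ x => x ∈ Set.Icc (0 : ℝ) 1).2 ⟨ht, hz⟩
  have hlim : ∀ t ∈ Set.Icc (0 : ℝ) 1, Tendsto (fun r => confidenceMatrix P (update z k t) ^ r)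
      atTop (𝓝 (H (update z k t))) := fun t ht =>
    tendsto_pi_nhds.2 fun i => tendsto_pi_nhds.2 (hH _ (hmem t ht) i)
  have hreach : ∀ t ∈ Set.Icc (0 : ℝ) 1, ∀ i, ∃ j, update z k t j = 1 ∧
      0 < (confidenceMatrix P (update z k t) ^ m) i j := fun t ht i =>
    exists_pow_confidenceMatrix_pos hP (hmem t ht) (by rwa [update_of_ne hsk]) m i (hm i s)
  have hcost_one : ∑ j, H (update z k 1) k j ^ 2 * σ2 j = σ2 k := by
    simp [row_eq_one_of_tendsto_pow (hlim 1 ⟨zero_le_one, le_rfl⟩)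
      (confidenceMatrix_row_of_eq_one P (update_self k 1 z)), one_apply]
  have hcost_lt : ∀ t ∈ Set.Ico (0 : ℝ) 1, ∑ j, H (update z k t) k j ^ 2 * σ2 j < σ2 k := by
    intro t ht
    have ht' := Set.Ico_subset_Icc_self ht
    refine sum_sq_mul_lt_of_tendsto_pow_confidenceMatrix hP (hmem t ht') (hlim t ht')
      (hreach t ht') (fun j hj => ?_) k
    have hjk : j ≠ k := by
      rintro rfl
      exact ht.2.ne (by simpa using hj)
    exact ⟨(hσ j).le, hσk j hjk (by rwa [update_of_ne hjk] at hj)⟩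
  have hrow : ∀ t ∈ Set.Ico (0 : ℝ) 1, H (update z k t) = H (update z k 0) := by
    intro t ht
    have h0 : (0 : ℝ) ∈ Set.Icc 0 1 := ⟨le_rfl, zero_le_one⟩
    have hidem : update (update z k t) k 0 = update z k 0 := update_idem ..
    refine eq_of_tendsto_pow_confidenceMatrix_update hP (hidem ▸ hmem 0 h0) (by simpa using ht.2.ne)
      zero_ne_one (hlim t (Set.Ico_subset_Icc_self ht)) (hidem ▸ hlim 0 h0) (hidem ▸ hreach 0 h0)
  exact ⟨hcost_lt, hcost_one, setOf_forall_le_eq_Ico (fun t ht => by simp only [hrow t ht])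
    (hcost_one ▸ hcost_lt 0 ⟨le_rfl, one_pos⟩)⟩

/-- Fix an agent `k` and values `z_j ∈ [0,1]` for `j ≠ k` such that
`S(z_{-k})` is nonempty and `σ_k² > σ_i²` for every `i ∈ S(z_{-k})`. Then for every
`z_k ∈ [0,1)`, `v_k(z_k, z_{-k}) < σ_k² = v_k(1, z_{-k})`; consequently the best
response set `B_k(z_{-k}) = argmin_{z_k ∈ [0,1]} v_k(z_k, z_{-k})` equals `[0,1)`. -/
theorem stmt_6 (n : ℕ) (hn : 2 ≤ n)
    (P : Matrix (Fin n) (Fin n) ℝ)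
    (hPnn : ∀ i j, 0 ≤ P i j)
    (hProw : ∀ i, ∑ j, P i j = 1)
    (hPdiag : ∀ i, P i i = 0)
    (hPprim : ∃ m : ℕ, ∀ i j, 0 < (P ^ m) i j)
    (σ2 : Fin n → ℝ) (hσ : ∀ i, 0 < σ2 i)
    (H : (Fin n → ℝ) → Matrix (Fin n) (Fin n) ℝ)
    (hH : ∀ z : Fin n → ℝ, (∀ i, z i ∈ Set.Icc (0 : ℝ) 1) →
      ∀ i j, Tendsto
        (fun t : ℕ => (((1 - Matrix.diagonal z) * P + Matrix.diagonal z) ^ t) i j)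
        atTop (𝓝 (H z i j)))
    (k : Fin n) (z : Fin n → ℝ)
    (hz : ∀ j, j ≠ k → z j ∈ Set.Icc (0 : ℝ) 1)
    (hS : ∃ j, j ≠ k ∧ z j = 1)
    (hσk : ∀ i, i ≠ k → z i = 1 → σ2 i < σ2 k) :
    (∀ t ∈ Set.Ico (0 : ℝ) 1,
      ∑ j, (H (Function.update z k t) k j) ^ 2 * σ2 j < σ2 k) ∧
    (∑ j, (H (Function.update z k 1) k j) ^ 2 * σ2 j = σ2 k) ∧
    ({t ∈ Set.Icc (0 : ℝ) 1 | ∀ s ∈ Set.Icc (0 : ℝ) 1,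
        ∑ j, (H (Function.update z k t) k j) ^ 2 * σ2 j ≤
        ∑ j, (H (Function.update z k s) k j) ^ 2 * σ2 j}
      = Set.Ico (0 : ℝ) 1) :=
  stmt_6_general n P hPnn hProw hPprim σ2 hσ H hH k z hz hS hσk
end

section
/- Let μ*_i = σ_i^{−2}/∑_j σ_j^{−2}. A vector z ∈ [0,1)^n satisfies π_i/(1 − z_i) = γ(z) μ*_i for every i if and only if there exists α with 0 < α ≤ α_* = 1/max_i(π_i σ_i²) such that z_i = 1 − α π_i σ_i² for every i. In other words, {z ∈ [0,1)^n : (I − [z])^{−1}π = γ(z)μ*} = {1 − α[π]σ² : 0 < α ≤ α_*}. -/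
open Finset

/-- Let `μ*_i = σ_i^{-2}/∑_j σ_j^{-2}`. A vector `z ∈ [0,1)ⁿ` satisfies
`π_i/(1 - z_i) = γ(z) μ*_i` for every `i` if and only if there exists `α` with
`0 < α ≤ α_* = 1/max_i (π_i σ_i²)` such that `z_i = 1 - α π_i σ_i²` for every `i`;
i.e. `{z ∈ [0,1)ⁿ : (I-[z])⁻¹π = γ(z)μ*} = {1 - α[π]σ² : 0 < α ≤ α_*}`. -/
theorem stmt_9 (n : ℕ) (hn : 1 ≤ n)
    (π σ2 : Fin n → ℝ) (hπpos : ∀ i, 0 < π i) (hπsum : ∑ i, π i = 1)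
    (hσ : ∀ i, 0 < σ2 i) :
    {z : Fin n → ℝ | (∀ i, z i ∈ Set.Ico (0 : ℝ) 1) ∧
        ∀ i, π i / (1 - z i) =
          (∑ j, π j / (1 - z j)) * ((σ2 i)⁻¹ / ∑ j, (σ2 j)⁻¹)}
      = {z : Fin n → ℝ | ∃ α : ℝ, 0 < α ∧
          α ≤ 1 / (Finset.univ.sup' ⟨⟨0, hn⟩, Finset.mem_univ _⟩
                    fun i => π i * σ2 i) ∧
          ∀ i, z i = 1 - α * (π i * σ2 i)} := by
  ext z
  simp only [Set.mem_setOf_eq, Set.mem_Ico]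
  set M := (Finset.univ.sup' ⟨⟨0, hn⟩, Finset.mem_univ _⟩ fun i => π i * σ2 i) with hMdef
  obtain ⟨i0, -, hi0⟩ := Finset.exists_mem_eq_sup' (⟨⟨0, hn⟩, Finset.mem_univ _⟩ :
    (Finset.univ : Finset (Fin n)).Nonempty) (fun i => π i * σ2 i)
  have hM0 : M = π i0 * σ2 i0 := by rw [hMdef, hi0]
  have hMpos : 0 < M := by rw [hM0]; exact mul_pos (hπpos i0) (hσ i0)
  have hle : ∀ i, π i * σ2 i ≤ M := by
    intro i; rw [hMdef]
    exact Finset.le_sup' (fun i => π i * σ2 i) (Finset.mem_univ i)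
  have hS : 0 < ∑ j, (σ2 j)⁻¹ :=
    Finset.sum_pos (fun j _ => inv_pos.2 (hσ j)) ⟨i0, Finset.mem_univ _⟩
  have hS' : (∑ j, (σ2 j)⁻¹) ≠ 0 := hS.ne'
  constructor
  · rintro ⟨hz, heq⟩
    have h1 : ∀ i, 0 < 1 - z i := fun i => by have := (hz i).2; linarith
    have hγ : 0 < ∑ j, π j / (1 - z j) :=
      Finset.sum_pos (fun j _ => div_pos (hπpos j) (h1 j)) ⟨i0, Finset.mem_univ _⟩
    set γ := ∑ j, π j / (1 - z j) with hγdef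
    set S := ∑ j, (σ2 j)⁻¹ with hSdef
    have key : ∀ i, 1 - z i = S / γ * (π i * σ2 i) := by
      intro i
      have h := heq i
      field_simp [(h1 i).ne', (hσ i).ne', hS.ne', hγ.ne'] at h ⊢
      linear_combination -h
    refine ⟨S / γ, div_pos hS hγ, ?_, ?_⟩
    · have h0 := key i0
      rw [← hM0] at h0
      rw [le_div_iff₀ hMpos]
      have := (hz i0).1
      linarith
    · intro i
      have := key i
      linarith
  · rintro ⟨α, hα, hαM, hz⟩
    have hzi : ∀ i, 1 - z i = α * (π i * σ2 i) := fun i => by rw [hz i]; ring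
    have hpos : ∀ i, 0 < α * (π i * σ2 i) :=
      fun i => mul_pos hα (mul_pos (hπpos i) (hσ i))
    have hterm : ∀ i, π i / (1 - z i) = (σ2 i)⁻¹ / α := by
      intro i
      rw [hzi i]
      field_simp [hα.ne', (hπpos i).ne', (hσ i).ne']
    constructor
    · intro i
      constructor
      · have h1 : α * (π i * σ2 i) ≤ (1 / M) * M := by
          apply mul_le_mul hαM (hle i) (le_of_lt (mul_pos (hπpos i) (hσ i)))
          positivity
        rw [one_div, inv_mul_cancel₀ hMpos.ne'] at h1
        rw [hz i]; linarith
      · rw [hz i]; have := hpos i; linarith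
    · intro i
      have hsum : (∑ j, π j / (1 - z j)) = (∑ j, (σ2 j)⁻¹) / α := by
        rw [Finset.sum_div]
        exact Finset.sum_congr rfl fun j _ => hterm j
      rw [hterm i, hsum, div_mul_div_comm, mul_comm α (∑ j, (σ2 j)⁻¹),
        mul_div_mul_left _ _ hS']
end

section
/- The Pareto frontier equals Z*: a profile z ∈ [0,1]^n is Pareto optimal if and only if there exists α with 0 < α ≤ α_* = 1/max_i(π_i σ_i²) such that z_i = 1 − α π_i σ_i² for every i. -/
open Matrix Filter Topology Finset

namespace Stmt10Aux

variable {n : ℕ}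

lemma pow_entry_nonneg (A : Matrix (Fin n) (Fin n) ℝ) (hA : ∀ i j, 0 ≤ A i j) :
    ∀ t i j, 0 ≤ (A ^ t) i j := by
  intro t
  induction t with
  | zero =>
    intro i j
    rw [pow_zero, Matrix.one_apply]
    split <;> norm_num
  | succ t ih =>
    intro i j
    rw [pow_succ, Matrix.mul_apply]
    exact Finset.sum_nonneg fun k _ => mul_nonneg (ih i k) (hA k j)

lemma pow_rowsum (A : Matrix (Fin n) (Fin n) ℝ) (hA1 : ∀ i, ∑ j, A i j = 1) :
    ∀ t i, ∑ j, (A ^ t) i j = 1 := by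
  intro t
  induction t with
  | zero => intro i; simp [Matrix.one_apply]
  | succ t ih =>
    intro i
    simp only [pow_succ, Matrix.mul_apply]
    rw [Finset.sum_comm]
    calc ∑ k, ∑ j, (A ^ t) i k * A k j = ∑ k, (A ^ t) i k * ∑ j, A k j := by
          simp [Finset.mul_sum]
      _ = 1 := by simp [hA1, ih]

lemma vec_pow_stat (A : Matrix (Fin n) (Fin n) ℝ) (u : Fin n → ℝ)
    (hu : ∀ j, ∑ i, u i * A i j = u j) :
    ∀ t j, ∑ i, u i * (A ^ t) i j = u j := by
  intro t
  induction t with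
  | zero => intro j; simp [Matrix.one_apply, mul_ite, Finset.sum_ite_eq]
  | succ t ih =>
    intro j
    simp only [pow_succ, Matrix.mul_apply, Finset.mul_sum]
    rw [Finset.sum_comm]
    calc ∑ k, ∑ i, u i * ((A ^ t) i k * A k j)
        = ∑ k, (∑ i, u i * (A ^ t) i k) * A k j := by
          simp [Finset.sum_mul, mul_assoc]
      _ = ∑ k, u k * A k j := by simp [ih]
      _ = u j := hu j

lemma pow_mono (A B : Matrix (Fin n) (Fin n) ℝ) (hA0 : ∀ i j, 0 ≤ A i j)
    (hAB : ∀ i j, A i j ≤ B i j) :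
    ∀ t i j, (A ^ t) i j ≤ (B ^ t) i j := by
  have hB0 : ∀ i j, 0 ≤ B i j := fun i j => (hA0 i j).trans (hAB i j)
  intro t
  induction t with
  | zero => intro i j; rw [pow_zero, pow_zero]
  | succ t ih =>
    intro i j
    rw [pow_succ, pow_succ, Matrix.mul_apply, Matrix.mul_apply]
    refine Finset.sum_le_sum fun k _ => ?_
    exact mul_le_mul (ih i k) (hAB k j) (hA0 k j) (pow_entry_nonneg B hB0 t i k)

lemma stat_unique (hn : 0 < n) (A : Matrix (Fin n) (Fin n) ℝ)
    (hA0 : ∀ i j, 0 ≤ A i j) (hA1 : ∀ i, ∑ j, A i j = 1)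
    (m : ℕ) (hm : ∀ i j, 0 < (A ^ m) i j)
    (u w : Fin n → ℝ) (hu1 : ∑ i, u i = 1) (hw1 : ∑ i, w i = 1)
    (hu : ∀ j, ∑ i, u i * A i j = u j) (hw : ∀ j, ∑ i, w i * A i j = w j) :
    u = w := by
  have : Nonempty (Fin n) := ⟨⟨0, hn⟩⟩
  set B := A ^ m with hB
  have hB1 : ∀ i, ∑ j, B i j = 1 := pow_rowsum A hA1 m
  set d : Fin n → ℝ := fun i => u i - w i with hd
  have hdB : ∀ j, ∑ i, d i * B i j = d j := by
    intro j
    simp only [hd, sub_mul, Finset.sum_sub_distrib]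
    rw [vec_pow_stat A u hu m j, vec_pow_stat A w hw m j]
  have hdsum : ∑ i, d i = 0 := by
    simp [hd, Finset.sum_sub_distrib, hu1, hw1]
  set ε : ℝ := Finset.univ.inf' Finset.univ_nonempty
    (fun p : Fin n × Fin n => B p.1 p.2) with hε
  have hε0 : 0 < ε := by
    rw [hε, Finset.lt_inf'_iff]
    exact fun p _ => hm p.1 p.2
  have hεle : ∀ i j, ε ≤ B i j := fun i j =>
    Finset.inf'_le _ (Finset.mem_univ ((i, j) : Fin n × Fin n))
  have key : ∀ j, |d j| ≤ ∑ i, |d i| * (B i j - ε) := by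
    intro j
    have h1 : d j = ∑ i, d i * (B i j - ε) := by
      simp only [mul_sub, Finset.sum_sub_distrib, ← Finset.sum_mul, hdsum, zero_mul,
        sub_zero, hdB j]
    rw [h1]
    calc |∑ i, d i * (B i j - ε)| ≤ ∑ i, |d i * (B i j - ε)| :=
          Finset.abs_sum_le_sum_abs _ _
      _ = ∑ i, |d i| * (B i j - ε) := by
          refine Finset.sum_congr rfl fun i _ => ?_
          rw [abs_mul, abs_of_nonneg (sub_nonneg.mpr (hεle i j))]
  have main : ∑ j, |d j| ≤ (∑ i, |d i|) * (1 - n * ε) := by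
    calc ∑ j, |d j| ≤ ∑ j, ∑ i, |d i| * (B i j - ε) :=
          Finset.sum_le_sum fun j _ => key j
      _ = ∑ i, |d i| * (∑ j, (B i j - ε)) := by
          rw [Finset.sum_comm]
          exact Finset.sum_congr rfl fun i _ => (Finset.mul_sum _ _ _).symm
      _ = ∑ i, |d i| * (1 - n * ε) := by
          refine Finset.sum_congr rfl fun i _ => ?_
          rw [Finset.sum_sub_distrib, hB1 i, Finset.sum_const, Finset.card_univ,
            Fintype.card_fin, nsmul_eq_mul]
      _ = (∑ i, |d i|) * (1 - n * ε) := by rw [Finset.sum_mul]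
  have hnε : 0 < (n : ℝ) * ε := by
    have : (0 : ℝ) < n := by exact_mod_cast hn
    positivity
  have hT0 : 0 ≤ ∑ i, |d i| := Finset.sum_nonneg fun i _ => abs_nonneg _
  have hT : ∑ i, |d i| = 0 := by nlinarith [main]
  funext i
  have h1 : |d i| = 0 :=
    (Finset.sum_eq_zero_iff_of_nonneg (fun i _ => abs_nonneg (d i))).mp hT
      i (Finset.mem_univ i)
  have h2 : d i = 0 := abs_eq_zero.mp h1
  have h3 : u i - w i = 0 := h2
  linarith

end Stmt10Aux

/-- The Pareto frontier equals `Z*`: a profile `z ∈ [0,1]ⁿ` is Pareto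
optimal (for the costs `v_i(z) = ∑_j H_{ij}(z)² σ_j²`) if and only if there exists
`α` with `0 < α ≤ α_* = 1/max_i(π_i σ_i²)` such that `z_i = 1 - α π_i σ_i²` for
every `i`. -/
theorem stmt_10 (n : ℕ) (hn : 2 ≤ n)
    (P : Matrix (Fin n) (Fin n) ℝ)
    (hPnn : ∀ i j, 0 ≤ P i j)
    (hProw : ∀ i, ∑ j, P i j = 1)
    (hPdiag : ∀ i, P i i = 0)
    (hPprim : ∃ m : ℕ, ∀ i j, 0 < (P ^ m) i j)
    (π : Fin n → ℝ)
    (hπpos : ∀ i, 0 < π i)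
    (hπsum : ∑ i, π i = 1)
    (hπinv : ∀ j, ∑ i, π i * P i j = π j)
    (σ2 : Fin n → ℝ) (hσ : ∀ i, 0 < σ2 i)
    (H : (Fin n → ℝ) → Matrix (Fin n) (Fin n) ℝ)
    (hH : ∀ z : Fin n → ℝ, (∀ i, z i ∈ Set.Icc (0 : ℝ) 1) →
      ∀ i j, Tendsto
        (fun t : ℕ => (((1 - Matrix.diagonal z) * P + Matrix.diagonal z) ^ t) i j)
        atTop (𝓝 (H z i j)))
    (z : Fin n → ℝ) (hz : ∀ i, z i ∈ Set.Icc (0 : ℝ) 1) :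
    ((¬ ∃ zb : Fin n → ℝ, (∀ i, zb i ∈ Set.Icc (0 : ℝ) 1) ∧
        (∀ i, ∑ j, (H zb i j) ^ 2 * σ2 j ≤ ∑ j, (H z i j) ^ 2 * σ2 j) ∧
        (∃ i, ∑ j, (H zb i j) ^ 2 * σ2 j < ∑ j, (H z i j) ^ 2 * σ2 j))
      ↔ ∃ α : ℝ, 0 < α ∧
          α ≤ 1 / (Finset.univ.sup' ⟨⟨0, by omega⟩, Finset.mem_univ _⟩
                    fun i => π i * σ2 i) ∧
          ∀ i, z i = 1 - α * (π i * σ2 i)) := by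
  classical
  have hn0 : 0 < n := by omega
  have instNE : Nonempty (Fin n) := ⟨⟨0, hn0⟩⟩
  set Q : (Fin n → ℝ) → Matrix (Fin n) (Fin n) ℝ :=
    fun y => (1 - Matrix.diagonal y) * P + Matrix.diagonal y with hQdef
  -- basic entrywise description of Q
  have hQapp : ∀ (y : Fin n → ℝ) (i j : Fin n),
      Q y i j = (1 - y i) * P i j + (if i = j then y i else 0) := by
    intro y i j
    have h1 : (1 : Matrix (Fin n) (Fin n) ℝ) - Matrix.diagonal y
        = Matrix.diagonal (fun i => 1 - y i) := by
      rw [← Matrix.diagonal_one, ← Matrix.diagonal_sub]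
    rw [hQdef]
    simp only [Matrix.add_apply, h1, Matrix.diagonal_mul, Matrix.diagonal_apply]
  have hQ0 : ∀ y : Fin n → ℝ, (∀ i, y i ∈ Set.Icc (0:ℝ) 1) → ∀ i j, 0 ≤ Q y i j := by
    intro y hy i j
    rw [hQapp]
    have h1 := (hy i).1
    have h2 := (hy i).2
    have h3 : 0 ≤ (1 - y i) * P i j := mul_nonneg (by linarith) (hPnn i j)
    have h4 : (0:ℝ) ≤ if i = j then y i else 0 := by
      split_ifs
      · exact h1
      · exact le_rfl
    linarith
  have hQ1 : ∀ (y : Fin n → ℝ) (i : Fin n), ∑ j, Q y i j = 1 := by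
    intro y i
    simp only [hQapp]
    rw [Finset.sum_add_distrib, ← Finset.mul_sum, hProw]
    simp [Finset.sum_ite_eq]
  have hHtend : ∀ y, (∀ i, y i ∈ Set.Icc (0:ℝ) 1) → ∀ i j,
      Tendsto (fun t : ℕ => (Q y ^ t) i j) atTop (𝓝 (H y i j)) := fun y hy i j =>
    hH y hy i j
  have hH0 : ∀ y, (∀ i, y i ∈ Set.Icc (0:ℝ) 1) → ∀ i j, 0 ≤ H y i j := by
    intro y hy i j
    exact ge_of_tendsto' (hHtend y hy i j) fun t =>
      Stmt10Aux.pow_entry_nonneg (Q y) (hQ0 y hy) t i j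
  have hHrow : ∀ y, (∀ i, y i ∈ Set.Icc (0:ℝ) 1) → ∀ i, ∑ j, H y i j = 1 := by
    intro y hy i
    have h1 : Tendsto (fun t : ℕ => ∑ j, (Q y ^ t) i j) atTop (𝓝 (∑ j, H y i j)) :=
      tendsto_finset_sum _ fun j _ => hHtend y hy i j
    have h2 : (fun t : ℕ => ∑ j, (Q y ^ t) i j) = fun _ => (1:ℝ) :=
      funext fun t => Stmt10Aux.pow_rowsum (Q y) (hQ1 y) t i
    rw [h2] at h1
    exact tendsto_nhds_unique h1 tendsto_const_nhds
  have hHQ : ∀ y, (∀ i, y i ∈ Set.Icc (0:ℝ) 1) → ∀ i j,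
      ∑ k, H y i k * Q y k j = H y i j := by
    intro y hy i j
    have ha : Tendsto (fun t : ℕ => (Q y ^ (t+1)) i j) atTop (𝓝 (H y i j)) :=
      (hHtend y hy i j).comp (tendsto_add_atTop_nat 1)
    have hb : (fun t : ℕ => (Q y ^ (t+1)) i j)
        = fun t => ∑ k, (Q y ^ t) i k * Q y k j := by
      funext t; rw [pow_succ, Matrix.mul_apply]
    rw [hb] at ha
    have hc : Tendsto (fun t : ℕ => ∑ k, (Q y ^ t) i k * Q y k j) atTop
        (𝓝 (∑ k, H y i k * Q y k j)) :=
      tendsto_finset_sum _ fun k _ => (hHtend y hy i k).mul tendsto_const_nhds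
    exact tendsto_nhds_unique hc ha
  -- the optimal weights
  set S : ℝ := ∑ j, (σ2 j)⁻¹ with hSdef
  have hS : 0 < S :=
    Finset.sum_pos (fun j _ => inv_pos.mpr (hσ j)) Finset.univ_nonempty
  set w : Fin n → ℝ := fun j => (σ2 j)⁻¹ / S with hwdef
  have hw0 : ∀ j, 0 < w j := fun j => div_pos (inv_pos.mpr (hσ j)) hS
  have hwsum : ∑ j, w j = 1 := by
    simp only [hwdef]
    rw [← Finset.sum_div, ← hSdef]
    exact div_self hS.ne'
  have hwσ : ∀ j, w j * σ2 j = 1 / S := by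
    intro j
    simp only [hwdef]
    field_simp
    exact div_self (hσ j).ne'
  -- key quadratic identity
  have key : ∀ h : Fin n → ℝ, (∑ j, h j = 1) →
      ∑ j, (h j - w j)^2 * σ2 j = ∑ j, (h j)^2 * σ2 j - 1/S := by
    intro h hh
    have expand : ∀ j, (h j - w j)^2 * σ2 j
        = (h j)^2 * σ2 j - 2 * (h j * (w j * σ2 j)) + w j * (w j * σ2 j) := by
      intro j; ring
    calc ∑ j, (h j - w j)^2 * σ2 j
        = ∑ j, ((h j)^2 * σ2 j - 2 * (h j * (1/S)) + w j * (1/S)) := by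
          refine Finset.sum_congr rfl fun j _ => ?_
          rw [expand j, hwσ j]
      _ = ∑ j, (h j)^2 * σ2 j - 2 * ∑ j, h j * (1/S) + ∑ j, w j * (1/S) := by
          rw [Finset.sum_add_distrib, Finset.sum_sub_distrib, Finset.mul_sum]
      _ = ∑ j, (h j)^2 * σ2 j - 1/S := by
          rw [← Finset.sum_mul, ← Finset.sum_mul, hh, hwsum]; ring
  -- lower bound for costs
  have hvlow : ∀ y, (∀ i, y i ∈ Set.Icc (0:ℝ) 1) → ∀ i,
      1/S ≤ ∑ j, (H y i j)^2 * σ2 j := by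
    intro y hy i
    have h := key (fun j => H y i j) (hHrow y hy i)
    have h2 : 0 ≤ ∑ j, (H y i j - w j)^2 * σ2 j :=
      Finset.sum_nonneg fun j _ => mul_nonneg (sq_nonneg _) (hσ j).le
    linarith
  -- primitivity of Q y when y < 1
  have hprim : ∀ y : Fin n → ℝ, (∀ i, 0 ≤ y i) → (∀ i, y i < 1) →
      ∃ m', ∀ i j, 0 < (Q y ^ m') i j := by
    intro y hy0 hy1
    obtain ⟨m, hm⟩ := hPprim
    set δ : ℝ := Finset.univ.inf' Finset.univ_nonempty (fun i => 1 - y i) with hδ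
    have hδ0 : 0 < δ := by
      rw [hδ, Finset.lt_inf'_iff]
      exact fun i _ => by linarith [hy1 i]
    have hδle : ∀ i, δ ≤ 1 - y i := fun i => Finset.inf'_le _ (Finset.mem_univ i)
    have hle : ∀ i j, (δ • P) i j ≤ Q y i j := by
      intro i j
      rw [Matrix.smul_apply, hQapp, smul_eq_mul]
      have h1 : δ * P i j ≤ (1 - y i) * P i j :=
        mul_le_mul_of_nonneg_right (hδle i) (hPnn i j)
      have h2 : (0:ℝ) ≤ if i = j then y i else 0 := by
        split_ifs
        · exact hy0 i
        · exact le_rfl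
      linarith
    have h0 : ∀ i j, 0 ≤ (δ • P) i j := fun i j => by
      rw [Matrix.smul_apply, smul_eq_mul]
      exact mul_nonneg hδ0.le (hPnn i j)
    refine ⟨m, fun i j => ?_⟩
    have h1 := Stmt10Aux.pow_mono (δ • P) (Q y) h0 hle m i j
    have h2 : ((δ • P) ^ m) i j = δ^m * (P^m) i j := by
      rw [smul_pow, Matrix.smul_apply, smul_eq_mul]
    have h3 := mul_pos (pow_pos hδ0 m) (hm i j)
    rw [h2] at h1
    linarith
  -- stationarity of w for Q on the Z* family
  have hstat : ∀ (y : Fin n → ℝ) (α : ℝ), (∀ i, y i = 1 - α * (π i * σ2 i)) →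
      ∀ j, ∑ i, w i * Q y i j = w j := by
    intro y α hyeq j
    have tterm : ∀ i, w i * Q y i j
        = α / S * (π i * P i j) + (if i = j then w i * y i else 0) := by
      intro i
      rw [hQapp, mul_add, mul_ite, mul_zero]
      congr 1
      have hwi := hwσ i
      rw [hyeq i]
      calc w i * ((1 - (1 - α * (π i * σ2 i))) * P i j)
          = α * π i * (w i * σ2 i) * P i j := by ring
        _ = α * π i * (1/S) * P i j := by rw [hwi]
        _ = α / S * (π i * P i j) := by ring
    rw [Finset.sum_congr rfl fun i _ => tterm i, Finset.sum_add_distrib,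
      ← Finset.mul_sum, hπinv j, Finset.sum_ite_eq']
    simp only [Finset.mem_univ, if_true]
    rw [hyeq j]
    have hwj := hwσ j
    have e := mul_inv_cancel₀ (hσ j).ne'
    linear_combination α * π j * hwj - 2 * α * S⁻¹ * π j * e
  -- on the Z* family all rows of H equal w
  have hvZrows : ∀ (y : Fin n → ℝ), (∀ i, y i ∈ Set.Icc (0:ℝ) 1) → ∀ (α : ℝ), 0 < α →
      (∀ i, y i = 1 - α * (π i * σ2 i)) → ∀ i j, H y i j = w j := by
    intro y hy α hα hyeq i j
    have hylt : ∀ i, y i < 1 := by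
      intro i
      rw [hyeq i]
      have := mul_pos hα (mul_pos (hπpos i) (hσ i))
      linarith
    obtain ⟨m', hm'⟩ := hprim y (fun i => (hy i).1) hylt
    have heq := Stmt10Aux.stat_unique hn0 (Q y) (hQ0 y hy) (hQ1 y) m' hm'
      (fun k => H y i k) w (hHrow y hy i) hwsum (hHQ y hy i) (hstat y α hyeq)
    exact congrFun heq j
  -- cost on the Z* family is exactly 1/S
  have hvZval : ∀ (y : Fin n → ℝ), (∀ i, y i ∈ Set.Icc (0:ℝ) 1) → ∀ (α : ℝ), 0 < α →
      (∀ i, y i = 1 - α * (π i * σ2 i)) →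
      ∀ i, ∑ j, (H y i j)^2 * σ2 j = 1/S := by
    intro y hy α hα hyeq i
    have hr := hvZrows y hy α hα hyeq
    have h := key (fun j => H y i j) (hHrow y hy i)
    have h0 : ∑ j, (H y i j - w j)^2 * σ2 j = 0 := by
      refine Finset.sum_eq_zero fun j _ => ?_
      rw [hr i j]
      ring
    linarith
  -- the maximum
  have ne1 : (Finset.univ : Finset (Fin n)).Nonempty := ⟨⟨0, hn0⟩, Finset.mem_univ _⟩
  obtain ⟨i₀, -, hi₀⟩ := Finset.exists_mem_eq_sup' ne1 (fun i => π i * σ2 i)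
  set M := Finset.univ.sup' ne1 (fun i => π i * σ2 i) with hMdef
  have hM0 : 0 < M := by
    rw [hi₀]
    exact mul_pos (hπpos i₀) (hσ i₀)
  have hMle : ∀ i, π i * σ2 i ≤ M := by
    intro i
    rw [hMdef]
    exact Finset.le_sup' (fun i => π i * σ2 i) (Finset.mem_univ i)
  constructor
  · -- Pareto optimal → z ∈ Z*
    intro hP
    -- the benchmark profile
    set zb : Fin n → ℝ := fun i => 1 - (1/M) * (π i * σ2 i) with hzbdef
    have hzbc : ∀ i, zb i ∈ Set.Icc (0:ℝ) 1 := by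
      intro i
      have h1 : 0 < (1/M) * (π i * σ2 i) :=
        mul_pos (one_div_pos.mpr hM0) (mul_pos (hπpos i) (hσ i))
      have h2 : (1/M) * (π i * σ2 i) ≤ 1 := by
        rw [one_div_mul_eq_div, div_le_one hM0]
        exact hMle i
      constructor
      · show (0:ℝ) ≤ 1 - (1/M) * (π i * σ2 i)
        linarith
      · show (1:ℝ) - (1/M) * (π i * σ2 i) ≤ 1
        linarith
    have hvzb : ∀ i, ∑ j, (H zb i j)^2 * σ2 j = 1/S :=
      hvZval zb hzbc (1/M) (one_div_pos.mpr hM0) (fun i => rfl)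
    -- all costs of z equal 1/S
    have hle : ∀ i, ∑ j, (H z i j)^2 * σ2 j ≤ 1/S := by
      by_contra hc
      push_neg at hc
      obtain ⟨i, hi⟩ := hc
      refine hP ⟨zb, hzbc, fun i' => ?_, ⟨i, ?_⟩⟩
      · exact (hvzb i').le.trans (hvlow z hz i')
      · rw [hvzb i]; exact hi
    have heqv : ∀ i, ∑ j, (H z i j)^2 * σ2 j = 1/S := fun i =>
      le_antisymm (hle i) (hvlow z hz i)
    -- rows of H z equal w
    have hrows : ∀ i j, H z i j = w j := by
      intro i j
      have h := key (fun j => H z i j) (hHrow z hz i)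
      have h0 : ∑ j', (H z i j' - w j')^2 * σ2 j' = 0 := by
        rw [h, heqv i]; ring
      have h1 := (Finset.sum_eq_zero_iff_of_nonneg
        (fun j' _ => mul_nonneg (sq_nonneg _) (hσ j').le)).mp h0 j (Finset.mem_univ j)
      have h2 : (H z i j - w j)^2 = 0 := by
        rcases mul_eq_zero.mp h1 with h|h
        · exact h
        · exact absurd h (hσ j).ne'
      have h3 : H z i j - w j = 0 := by
        have := pow_eq_zero_iff (two_ne_zero) |>.mp h2
        exact this
      linarith
    -- w is stationary for Q z
    have hwQ : ∀ j, ∑ k, w k * Q z k j = w j := by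
      intro j
      have h := hHQ z hz ⟨0, hn0⟩ j
      simp only [hrows] at h
      exact h
    -- deduce the stationarity of u for P
    have huP : ∀ j, ∑ k, (w k * (1 - z k)) * P k j = w j * (1 - z j) := by
      intro j
      have h := hwQ j
      have e1 : ∀ k, w k * Q z k j
          = (w k * (1 - z k)) * P k j + (if k = j then w k * z k else 0) := by
        intro k
        rw [hQapp, mul_add, mul_ite, mul_zero, ← mul_assoc]
      rw [Finset.sum_congr rfl fun k _ => e1 k, Finset.sum_add_distrib,
        Finset.sum_ite_eq'] at h
      simp only [Finset.mem_univ, if_true] at h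
      linarith
    set u : Fin n → ℝ := fun k => w k * (1 - z k) with hudef
    have hu0 : ∀ k, 0 ≤ u k := fun k =>
      mul_nonneg (hw0 k).le (by linarith [(hz k).2])
    set s := ∑ k, u k with hsdef
    by_cases hs : s = 0
    · -- degenerate case: all z k = 1, contradiction with rows = w
      exfalso
      have h00 : ∑ k, u k = 0 := by rw [← hsdef]; exact hs
      have hz1 : ∀ k, z k = 1 := by
        intro k
        have h1 := (Finset.sum_eq_zero_iff_of_nonneg (fun k _ => hu0 k)).mp h00
          k (Finset.mem_univ k)
        have h2 : w k * (1 - z k) = 0 := h1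
        rcases mul_eq_zero.mp h2 with h|h
        · exact absurd h (hw0 k).ne'
        · linarith
      have hQI : Q z = 1 := by
        ext i j
        rw [hQapp, hz1 i]
        simp [Matrix.one_apply]
      have hcontr : H z ⟨0, hn0⟩ ⟨1, by omega⟩ = 0 := by
        have h1 := hHtend z hz ⟨0, hn0⟩ ⟨1, by omega⟩
        have h2 : (fun t : ℕ => (Q z ^ t) (⟨0, hn0⟩ : Fin n) ⟨1, by omega⟩)
            = fun _ => (0:ℝ) := by
          funext t
          rw [hQI, one_pow, Matrix.one_apply_ne]
          simp [Fin.ext_iff]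
        rw [h2] at h1
        exact (tendsto_nhds_unique h1 tendsto_const_nhds)
      have h3 := hrows ⟨0, hn0⟩ ⟨1, by omega⟩
      rw [hcontr] at h3
      exact absurd h3.symm (hw0 _).ne'
    · have hs0 : 0 < s :=
        lt_of_le_of_ne (by rw [hsdef]; exact Finset.sum_nonneg fun k _ => hu0 k)
          (Ne.symm hs)
      obtain ⟨m, hm⟩ := hPprim
      have husum : ∑ k, u k / s = 1 := by
        rw [← Finset.sum_div, ← hsdef, div_self hs0.ne']
      have hustat : ∀ j, ∑ k, (u k / s) * P k j = u j / s := by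
        intro j
        have h1 : ∑ k, u k / s * P k j = (∑ k, u k * P k j) / s := by
          rw [Finset.sum_div]
          exact Finset.sum_congr rfl fun k _ => (div_mul_eq_mul_div _ _ _)
        rw [h1, huP j]
      have heqπ := Stmt10Aux.stat_unique hn0 P hPnn hProw m hm
        (fun k => u k / s) π husum hπsum hustat hπinv
      have huk : ∀ k, u k = s * π k := by
        intro k
        have h1 := congrFun heqπ k
        have h2 : u k = π k * s := (div_eq_iff hs0.ne').mp h1
        linarith
      have hzi : ∀ i, z i = 1 - (s * S) * (π i * σ2 i) := by
        intro i
        have h1 : w i * (1 - z i) = s * π i := huk i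
        have hw' : w i = (σ2 i)⁻¹ / S := rfl
        rw [hw'] at h1
        have hσne := (hσ i).ne'
        have hSne := hS.ne'
        field_simp at h1
        nlinarith [h1]
      refine ⟨s * S, mul_pos hs0 hS, ?_, hzi⟩
      show s * S ≤ 1 / M
      rw [le_div_iff₀ hM0]
      have h1 := (hz i₀).1
      have h2 := hzi i₀
      have hMeq : M = π i₀ * σ2 i₀ := hi₀
      rw [← hMeq] at h2
      linarith [h2, h1]
  · -- z ∈ Z* → Pareto optimal
    rintro ⟨α, hα0, hαle, hzeq⟩ ⟨zb, hzbc, hall, i, hlt⟩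
    have hvz : ∀ i, ∑ j, (H z i j)^2 * σ2 j = 1/S := hvZval z hz α hα0 hzeq
    have hlow := hvlow zb hzbc i
    rw [hvz i] at hlt
    linarith
end
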